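/- arXiv:2408.04897 — 10 statements merged into one kernel-verified Lean document; each statement's English description precedes it below -/
import Mathlib

section
/- If b ≥ 4 is even, then for every integer c ≥ 1 there exists a magic rectangle set MRS(2,b;c). -/
/-!
Let `n = bc`. The numbers `1, …, 2n` split into the `n` pairs `{n - v, n + 1 + v}` (`v < n`), each
of sum `2n + 1`. Putting one pair in each column of each rectangle makes all column sums `2n + 1`,
and twice the top row sum of a rectangle is `b(2n + 1) + ∑ ±(2v + 1)`, the sign recording which
member of the pair is on top. So it suffices to partition `{0, …, n - 1}` into `c` blocks of size
`b` with signs making `∑ ±(2v + 1)` vanish on each block. Such partitions are glued together, side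
by side or one on top of the other, from three small ones: `{0,1,2,3}` with signs `+--+`, `{0,…,5}`
with signs `---+-+`, and two blocks of size `6` on `{0,…,11}`. Shifting the values of a block keeps
its signed sum zero as long as it carries as many `+` as `-` signs, which holds for all of these
except `{0,…,5}`; that one is used at most once and never shifted.
-/

open Finset

def pairEntry (n : ℕ) (s : ℤˣ) (v : ℕ) : ℕ :=
  if s = 1 then n + 1 + v else n - v

lemma pairEntry_mem_Icc {n v : ℕ} (s : ℤˣ) (hv : v < n) : pairEntry n s v ∈ Icc 1 (2 * n) := by
  unfold pairEntry; split_ifs <;> simp only [mem_Icc] <;> omega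

lemma two_mul_pairEntry {n v : ℕ} (s : ℤˣ) (hv : v < n) :
    2 * (pairEntry n s v : ℤ) = 2 * n + 1 + s * (2 * v + 1) := by
  rcases Int.units_eq_one_or s with rfl | rfl
  · simp [pairEntry]; ring
  · simp [pairEntry, Nat.cast_sub hv.le]; ring

lemma pairEntry_add_pairEntry_neg {n v : ℕ} (s : ℤˣ) (hv : v < n) :
    pairEntry n s v + pairEntry n (-s) v = 2 * n + 1 := by
  rcases Int.units_eq_one_or s with rfl | rfl <;> simp [pairEntry] <;> omega

lemma pairEntry_injective {n v v' : ℕ} {s s' : ℤˣ} (hv : v < n) (hv' : v' < n)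
    (h : pairEntry n s v = pairEntry n s' v') : s = s' ∧ v = v' := by
  rcases Int.units_eq_one_or s with rfl | rfl <;> rcases Int.units_eq_one_or s' with rfl | rfl <;>
    simp [pairEntry] at h ⊢ <;> omega

theorem existsUnique_of_injective_of_card_le {α β : Type*} [Fintype α] {f : α → β}
    (hf : Function.Injective f) {s : Finset β} (hmaps : ∀ a, f a ∈ s)
    (hcard : #s ≤ Fintype.card α) : ∀ x ∈ s, ∃! a, f a = x := by
  intro x hx
  obtain ⟨a, -, rfl⟩ := Finset.surjOn_of_injOn_of_card_le f (s := univ)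
    (fun a _ => hmaps a) hf.injOn (by simpa using hcard) hx
  exact ⟨a, rfl, fun a' h => hf h⟩

def signedOddSum {b : ℕ} (s : Fin b → ℤˣ) (v : Fin b → ℕ) : ℤ :=
  ∑ j, (s j : ℤ) * (2 * v j + 1)

lemma signedOddSum_const_add {b : ℕ} {s : Fin b → ℤˣ} (hs : ∑ j, (s j : ℤ) = 0) (v : Fin b → ℕ)
    (k : ℕ) : signedOddSum s (fun j => k + v j) = signedOddSum s v := by
  have : signedOddSum s (fun j => k + v j) = signedOddSum s v + 2 * k * ∑ j, (s j : ℤ) := by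
    simp only [signedOddSum, mul_sum, ← sum_add_distrib]
    push_cast
    exact sum_congr rfl fun j _ => by ring
  rw [this, hs, mul_zero, add_zero]

lemma signedOddSum_append {b₁ b₂ : ℕ} (s₁ : Fin b₁ → ℤˣ) (s₂ : Fin b₂ → ℤˣ) (v₁ : Fin b₁ → ℕ)
    (v₂ : Fin b₂ → ℕ) :
    signedOddSum (Fin.append s₁ s₂) (Fin.append v₁ v₂) = signedOddSum s₁ v₁ + signedOddSum s₂ v₂ := by
  simp [signedOddSum, Fin.sum_univ_add]

structure SignedOddPartition (b c : ℕ) where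
  val : Fin c → Fin b → ℕ
  sign : Fin c → Fin b → ℤˣ
  val_lt : ∀ t j, val t j < b * c
  val_injective : Function.Injective (Function.uncurry val)
  signedOddSum_eq_zero : ∀ t, signedOddSum (sign t) (val t) = 0

namespace SignedOddPartition

variable {b c : ℕ}

def IsBalanced (P : SignedOddPartition b c) : Prop := ∀ t, ∑ j, (P.sign t j : ℤ) = 0

def stack {c₁ c₂ : ℕ} (P : SignedOddPartition b c₁) (Q : SignedOddPartition b c₂)
    (hQ : Q.IsBalanced) : SignedOddPartition b (c₁ + c₂) where
  val := Fin.append P.val fun t j => b * c₁ + Q.val t j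
  sign := Fin.append P.sign Q.sign
  val_lt t j := by
    rw [mul_add]
    induction t using Fin.addCases with
    | left t => have := P.val_lt t j; simp only [Fin.append_left]; omega
    | right t => have := Q.val_lt t j; simp only [Fin.append_right]; omega
  val_injective := by
    rintro ⟨t, j⟩ ⟨t', j'⟩ h
    induction t using Fin.addCases with | left t | right t <;>
      induction t' using Fin.addCases with | left t' | right t' <;>
      simp only [Function.uncurry_apply_pair, Fin.append_left, Fin.append_right] at h
    · cases P.val_injective (a₁ := (t, j)) (a₂ := (t', j')) h; rfl
    · have := P.val_lt t j; omega
    · have := P.val_lt t' j'; omega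
    · cases Q.val_injective (a₁ := (t, j)) (a₂ := (t', j')) (by simpa using h); rfl
  signedOddSum_eq_zero t := by
    induction t using Fin.addCases with
    | left t => simpa using P.signedOddSum_eq_zero t
    | right t => simpa [signedOddSum_const_add (hQ t)] using Q.signedOddSum_eq_zero t

lemma IsBalanced.stack {c₁ c₂ : ℕ} {P : SignedOddPartition b c₁} {Q : SignedOddPartition b c₂}
    (hP : P.IsBalanced) (hQ : Q.IsBalanced) : (P.stack Q hQ).IsBalanced := by
  intro t
  induction t using Fin.addCases with
  | left t => simpa [SignedOddPartition.stack] using hP t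
  | right t => simpa [SignedOddPartition.stack] using hQ t

def append {b₁ b₂ : ℕ} (P : SignedOddPartition b₁ c) (Q : SignedOddPartition b₂ c)
    (hQ : Q.IsBalanced) : SignedOddPartition (b₁ + b₂) c where
  val t := Fin.append (P.val t) fun j => b₁ * c + Q.val t j
  sign t := Fin.append (P.sign t) (Q.sign t)
  val_lt t j := by
    rw [add_mul]
    induction j using Fin.addCases with
    | left j => have := P.val_lt t j; simp only [Fin.append_left]; omega
    | right j => have := Q.val_lt t j; simp only [Fin.append_right]; omega
  val_injective := by
    rintro ⟨t, j⟩ ⟨t', j'⟩ h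
    induction j using Fin.addCases with | left j | right j <;>
      induction j' using Fin.addCases with | left j' | right j' <;>
      simp only [Function.uncurry_apply_pair, Fin.append_left, Fin.append_right] at h
    · cases P.val_injective (a₁ := (t, j)) (a₂ := (t', j')) h; rfl
    · have := P.val_lt t j; omega
    · have := P.val_lt t' j'; omega
    · cases Q.val_injective (a₁ := (t, j)) (a₂ := (t', j')) (by simpa using h); rfl
  signedOddSum_eq_zero t := by
    rw [signedOddSum_append, signedOddSum_const_add (hQ t), P.signedOddSum_eq_zero,
      Q.signedOddSum_eq_zero, add_zero]

lemma IsBalanced.append {b₁ b₂ : ℕ} {P : SignedOddPartition b₁ c} {Q : SignedOddPartition b₂ c}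
    (hP : P.IsBalanced) (hQ : Q.IsBalanced) : (P.append Q hQ).IsBalanced := by
  intro t
  simp [SignedOddPartition.append, Fin.sum_univ_add, hP t, hQ t]

def noBlocks (b : ℕ) : SignedOddPartition b 0 where
  val := Fin.elim0
  sign := Fin.elim0
  val_lt t := t.elim0
  val_injective p := p.1.elim0
  signedOddSum_eq_zero t := t.elim0

lemma isBalanced_noBlocks (b : ℕ) : (noBlocks b).IsBalanced := fun t => t.elim0

def emptyBlocks (c : ℕ) : SignedOddPartition 0 c where
  val _ := Fin.elim0
  sign _ := Fin.elim0
  val_lt _ j := j.elim0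
  val_injective p := p.2.elim0
  signedOddSum_eq_zero _ := by simp [signedOddSum]

lemma isBalanced_emptyBlocks (c : ℕ) : (emptyBlocks c).IsBalanced := fun _ => by simp

def four : SignedOddPartition 4 1 where
  val _ := ![0, 1, 2, 3]
  sign _ := ![1, -1, -1, 1]
  val_lt := by decide
  val_injective := by decide
  signedOddSum_eq_zero _ := by simp [signedOddSum, Fin.sum_univ_succ]

lemma isBalanced_four : four.IsBalanced := fun _ => by simp [four, Fin.sum_univ_succ]

def six : SignedOddPartition 6 1 where
  val _ := ![0, 1, 2, 3, 4, 5]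
  sign _ := ![-1, -1, -1, 1, -1, 1]
  val_lt := by decide
  val_injective := by decide
  signedOddSum_eq_zero _ := by simp [signedOddSum, Fin.sum_univ_succ]

def sixPair : SignedOddPartition 6 2 where
  val := ![![0, 1, 2, 3, 4, 6], ![5, 7, 8, 9, 10, 11]]
  sign := ![![1, -1, 1, -1, -1, 1], ![1, -1, -1, 1, -1, 1]]
  val_lt := by decide
  val_injective := by decide
  signedOddSum_eq_zero t := by fin_cases t <;> simp [signedOddSum, Fin.sum_univ_succ]

lemma isBalanced_sixPair : sixPair.IsBalanced := by
  intro t; fin_cases t <;> simp [sixPair, Fin.sum_univ_succ]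

lemma exists_isBalanced_four (c : ℕ) : ∃ P : SignedOddPartition 4 c, P.IsBalanced := by
  induction c with
  | zero => exact ⟨noBlocks 4, isBalanced_noBlocks 4⟩
  | succ c ih =>
    obtain ⟨P, hP⟩ := ih
    exact ⟨P.stack four isBalanced_four, hP.stack isBalanced_four⟩

lemma exists_isBalanced_four_mul (m c : ℕ) : ∃ P : SignedOddPartition (4 * m) c, P.IsBalanced := by
  induction m with
  | zero => exact ⟨emptyBlocks c, isBalanced_emptyBlocks c⟩
  | succ m ih =>
    obtain ⟨P, hP⟩ := ih
    obtain ⟨Q, hQ⟩ := exists_isBalanced_four c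
    exact ⟨P.append Q hQ, hP.append hQ⟩

lemma exists_isBalanced_six_two_mul (k : ℕ) : ∃ P : SignedOddPartition 6 (2 * k), P.IsBalanced := by
  induction k with
  | zero => exact ⟨noBlocks 6, isBalanced_noBlocks 6⟩
  | succ k ih =>
    obtain ⟨P, hP⟩ := ih
    exact ⟨P.stack sixPair isBalanced_sixPair, hP.stack isBalanced_sixPair⟩

lemma nonempty_six (c : ℕ) : Nonempty (SignedOddPartition 6 c) := by
  obtain ⟨k, rfl | rfl⟩ := Nat.even_or_odd' c
  · obtain ⟨P, -⟩ := exists_isBalanced_six_two_mul k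
    exact ⟨P⟩
  · obtain ⟨P, hP⟩ := exists_isBalanced_six_two_mul k
    rw [add_comm]
    exact ⟨six.stack P hP⟩

lemma nonempty_of_even {b : ℕ} (hb : 4 ≤ b) (hbe : Even b) (c : ℕ) :
    Nonempty (SignedOddPartition b c) := by
  obtain ⟨m, rfl | rfl⟩ : ∃ m, b = 4 * m ∨ b = 6 + 4 * m := by
    have := Nat.even_iff.mp hbe
    rcases (by omega : b % 4 = 0 ∨ b % 4 = 2) with h | h
    · exact ⟨b / 4, Or.inl (by omega)⟩
    · exact ⟨(b - 6) / 4, Or.inr (by omega)⟩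
  · obtain ⟨P, -⟩ := exists_isBalanced_four_mul m c
    exact ⟨P⟩
  · obtain ⟨P⟩ := nonempty_six c
    obtain ⟨Q, hQ⟩ := exists_isBalanced_four_mul m c
    exact ⟨P.append Q hQ⟩

def rect (P : SignedOddPartition b c) (t : Fin c) (i : Fin 2) (j : Fin b) : ℕ :=
  pairEntry (b * c) (if i = 0 then P.sign t j else -P.sign t j) (P.val t j)

lemma rect_mem_Icc (P : SignedOddPartition b c) (t : Fin c) (i : Fin 2) (j : Fin b) :
    P.rect t i j ∈ Icc 1 (2 * (b * c)) :=
  pairEntry_mem_Icc _ (P.val_lt t j)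

lemma rect_injective (P : SignedOddPartition b c) :
    Function.Injective fun p : Fin c × Fin 2 × Fin b => P.rect p.1 p.2.1 p.2.2 := by
  rintro ⟨t, i, j⟩ ⟨t', i', j'⟩ h
  obtain ⟨hs, hv⟩ := pairEntry_injective (P.val_lt t j) (P.val_lt t' j') h
  obtain ⟨rfl, rfl⟩ := Prod.ext_iff.mp (P.val_injective (a₁ := (t, j)) (a₂ := (t', j')) hv)
  have := units_ne_neg_self (P.sign t j)
  fin_cases i <;> fin_cases i' <;> simp_all [eq_comm]

lemma sum_rect_col (P : SignedOddPartition b c) (t : Fin c) (j : Fin b) :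
    ∑ i, P.rect t i j = 2 * (b * c) + 1 := by
  simpa [Fin.sum_univ_two, rect] using pairEntry_add_pairEntry_neg (P.sign t j) (P.val_lt t j)

lemma two_mul_sum_rect_row (P : SignedOddPartition b c) (t : Fin c) (i : Fin 2) :
    2 * ∑ j, P.rect t i j = b * (2 * (b * c) + 1) := by
  have hrow : signedOddSum (fun j => if i = 0 then P.sign t j else -P.sign t j) (P.val t) = 0 := by
    have := P.signedOddSum_eq_zero t
    fin_cases i <;> simp_all [signedOddSum]
  have : (2 * ∑ j, P.rect t i j : ℤ) = b * (2 * (b * c) + 1) := by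
    push_cast
    rw [mul_sum]
    simp only [rect, two_mul_pairEntry _ (P.val_lt t _)]
    rw [sum_add_distrib, ← signedOddSum, hrow]
    simp
  exact_mod_cast this

theorem exists_magicRectangleSet (P : SignedOddPartition b c) :
    ∃ A : Fin c → Fin 2 → Fin b → ℕ,
      (∀ x ∈ Finset.Icc 1 (2 * b * c),
        ∃! p : Fin c × Fin 2 × Fin b, A p.1 p.2.1 p.2.2 = x) ∧
      (∀ t i j, A t i j ∈ Finset.Icc 1 (2 * b * c)) ∧
      ∃ ω δ : ℕ,
        (∀ t : Fin c, ∀ i : Fin 2, (∑ j : Fin b, A t i j) = ω) ∧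
        (∀ t : Fin c, ∀ j : Fin b, (∑ i : Fin 2, A t i j) = δ) := by
  rw [mul_assoc]
  refine ⟨P.rect, existsUnique_of_injective_of_card_le P.rect_injective
    (fun p => P.rect_mem_Icc _ _ _) ?_, P.rect_mem_Icc,
    b * (2 * (b * c) + 1) / 2, 2 * (b * c) + 1, fun t i => ?_, P.sum_rect_col⟩
  · simp only [Nat.card_Icc, Fintype.card_prod, Fintype.card_fin]
    apply le_of_eq; ring_nf; omega
  · have := P.two_mul_sum_rect_row t i
    omega

end SignedOddPartition

theorem stmt1_general (b c : ℕ) (hb : 4 ≤ b) (hbe : Even b) :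
    ∃ A : Fin c → Fin 2 → Fin b → ℕ,
      (∀ x ∈ Finset.Icc 1 (2 * b * c),
        ∃! p : Fin c × Fin 2 × Fin b, A p.1 p.2.1 p.2.2 = x) ∧
      (∀ t i j, A t i j ∈ Finset.Icc 1 (2 * b * c)) ∧
      ∃ ω δ : ℕ,
        (∀ t : Fin c, ∀ i : Fin 2, (∑ j : Fin b, A t i j) = ω) ∧
        (∀ t : Fin c, ∀ j : Fin b, (∑ i : Fin 2, A t i j) = δ) := by
  obtain ⟨P⟩ := SignedOddPartition.nonempty_of_even hb hbe c
  exact P.exists_magicRectangleSet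

/-- If `b ≥ 4` is even, then there exists an `MRS(2,b;c)` for all `c ≥ 1`. -/
theorem stmt1 (b c : ℕ) (hb : 4 ≤ b) (hbe : Even b) (hc : 1 ≤ c) :
    ∃ A : Fin c → Fin 2 → Fin b → ℕ,
      (∀ x ∈ Finset.Icc 1 (2 * b * c),
        ∃! p : Fin c × Fin 2 × Fin b, A p.1 p.2.1 p.2.2 = x) ∧
      (∀ t i j, A t i j ∈ Finset.Icc 1 (2 * b * c)) ∧
      ∃ ω δ : ℕ,
        (∀ t : Fin c, ∀ i : Fin 2, (∑ j : Fin b, A t i j) = ω) ∧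
        (∀ t : Fin c, ∀ j : Fin b, (∑ i : Fin 2, A t i j) = δ) :=
  stmt1_general b c hb hbe
end

section
/- Let m,n,s,k,c be positive integers such that the product n·c is even and k is odd, and let Γ be a finite abelian group of order n·k·c having exactly one involution. Then there is no Γ-magic rectangle set MRS_Γ(m,n;s,k;c). -/
/-! Pairing each element of a finite abelian group with its negative shows that the sum of all
elements is the sum of the elements `g` with `2 • g = 0`; when `ι` is the only involution this is
`0 + ι = ι`. On the other hand, adding up the column sums of a magic rectangle set gives
`∑ g = (c * n) • δ`. Hence `ι = k • ι = (n * k * c) • δ = |Γ| • δ = 0` since `k` is odd,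
contradicting `ι ≠ 0`. -/

open Finset

/-- A Γ-magic rectangle set `MRS_Γ(m,n;s,k;c)` on partially filled arrays. -/
def IsPartialMRS {Γ : Type*} [AddCommGroup Γ] (m n s k c : ℕ)
    (A : Fin c → Fin m → Fin n → Option Γ) : Prop :=
  (∀ g : Γ, ∃! p : Fin c × Fin m × Fin n, A p.1 p.2.1 p.2.2 = some g) ∧
  (∀ t : Fin c, ∀ i : Fin m,
    (Finset.univ.filter fun j : Fin n => (A t i j).isSome).card = s) ∧
  (∀ t : Fin c, ∀ j : Fin n,
    (Finset.univ.filter fun i : Fin m => (A t i j).isSome).card = k) ∧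
  ∃ ω δ : Γ,
    (∀ t : Fin c, ∀ i : Fin m, (∑ j : Fin n, (A t i j).getD 0) = ω) ∧
    (∀ t : Fin c, ∀ j : Fin n, (∑ i : Fin m, (A t i j).getD 0) = δ)

/-- The number of involutions (elements of additive order 2) of `Γ`. -/
noncomputable def numInvolutions (Γ : Type*) [AddMonoid Γ] : ℕ :=
  Nat.card {g : Γ // addOrderOf g = 2}

section

variable {Γ : Type*} [AddCommGroup Γ] [Fintype Γ]

theorem sum_univ_eq_sum_filter_two_nsmul_eq_zero [DecidableEq Γ] :
    ∑ g : Γ, g = ∑ g with 2 • g = 0, g := by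
  rw [← sum_filter_add_sum_filter_not univ (fun g : Γ => 2 • g = 0), add_eq_left]
  refine sum_involution (fun g _ => -g) (fun g _ => add_neg_cancel g) ?_ ?_ fun g _ => neg_neg g
  · intro g hg _ hneg
    rw [mem_filter, two_nsmul] at hg
    exact hg.2 (by nth_rewrite 2 [← hneg]; exact add_neg_cancel g)
  · intro g hg
    simpa only [mem_filter, mem_univ, true_and, smul_neg, neg_eq_zero] using hg

theorem sum_univ_eq_of_unique_addOrderOf_eq_two {ι : Γ} (hι : addOrderOf ι = 2)
    (huniq : ∀ g : Γ, addOrderOf g = 2 → g = ι) : ∑ g : Γ, g = ι := by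
  classical
  have hι0 : ι ≠ 0 := by rintro rfl; simp at hι
  have htwo : ({g | 2 • g = 0} : Finset Γ) = {0, ι} := by
    ext g
    simp only [mem_filter, mem_univ, true_and, mem_insert, mem_singleton]
    constructor
    · intro hg
      by_cases h0 : g = 0
      · exact Or.inl h0
      · exact Or.inr (huniq g (addOrderOf_eq_prime hg h0))
    · rintro (rfl | hg)
      · exact nsmul_zero 2
      · rw [hg, ← hι, addOrderOf_nsmul_eq_zero]
  rw [sum_univ_eq_sum_filter_two_nsmul_eq_zero, htwo, sum_pair hι0.symm, zero_add]

theorem sum_getD_eq_sum_univ {P : Type*} [Fintype P] (A : P → Option Γ)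
    (hA : ∀ g : Γ, ∃! p, A p = some g) : ∑ p, (A p).getD 0 = ∑ g : Γ, g := by
  classical
  rw [← sum_fiberwise univ A, Fintype.sum_option, sum_eq_zero fun p hp => by
    rw [(mem_filter.mp hp).2, Option.getD_none], zero_add]
  refine sum_congr rfl fun g _ => ?_
  obtain ⟨p, hp, hpu⟩ := hA g
  have hfiber : ({q | A q = some g} : Finset P) = {p} := by
    ext q
    simpa only [mem_filter, mem_univ, true_and, mem_singleton] using ⟨hpu q, fun h => h ▸ hp⟩
  rw [hfiber, sum_singleton, hp, Option.getD_some]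

theorem IsPartialMRS.exists_sum_univ_eq_nsmul {m n s k c : ℕ}
    {A : Fin c → Fin m → Fin n → Option Γ} (hA : IsPartialMRS m n s k c A) :
    ∃ δ : Γ, ∑ g : Γ, g = (c * n) • δ := by
  obtain ⟨hplace, -, -, -, δ, -, hcol⟩ := hA
  refine ⟨δ, ?_⟩
  rw [← sum_getD_eq_sum_univ _ hplace]
  simp only [Fintype.sum_prod_type]
  calc ∑ t, ∑ i, ∑ j, (A t i j).getD 0
      = ∑ t : Fin c, ∑ j : Fin n, δ := sum_congr rfl fun t _ => by
        rw [sum_comm]; exact sum_congr rfl fun j _ => hcol t j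
    _ = (c * n) • δ := by simp only [sum_const, card_univ, Fintype.card_fin, mul_nsmul']

end

theorem stmt2_general (m n s k c : ℕ) (hkodd : Odd k)
    (Γ : Type*) [AddCommGroup Γ] [Fintype Γ] (hcard : Fintype.card Γ = n * k * c)
    (hinv : numInvolutions Γ = 1) :
    ¬ ∃ A : Fin c → Fin m → Fin n → Option Γ, IsPartialMRS m n s k c A := by
  rintro ⟨A, hA⟩
  obtain ⟨δ, hδ⟩ := hA.exists_sum_univ_eq_nsmul
  obtain ⟨⟨ι, hι⟩, huniq⟩ := Nat.card_eq_one_iff_exists.mp hinv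
  have hsum : ∑ g : Γ, g = ι :=
    sum_univ_eq_of_unique_addOrderOf_eq_two hι fun g hg => congrArg Subtype.val (huniq ⟨g, hg⟩)
  have hodd : k • ι = ι := by
    rw [← mod_addOrderOf_nsmul, hι, Nat.odd_iff.mp hkodd, one_nsmul]
  have hzero : k • ι = 0 := by
    rw [← hsum, hδ, ← mul_nsmul', show k * (c * n) = Fintype.card Γ by rw [hcard]; ring,
      card_nsmul_eq_zero]
  have hι_zero : ι = 0 := hodd ▸ hzero
  simp [hι_zero] at hι

/-- If `n·c` is even and `k` is odd, then there is no `MRS_Γ(m,n;s,k;c)` whenever `Γ` is an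
abelian group of order `n·k·c` having exactly one involution. -/
theorem stmt2 (m n s k c : ℕ) (hm : 0 < m) (hn : 0 < n) (hs : 0 < s) (hk : 0 < k)
    (hc : 0 < c) (hnc : Even (n * c)) (hkodd : Odd k)
    (Γ : Type*) [AddCommGroup Γ] [Fintype Γ] (hcard : Fintype.card Γ = n * k * c)
    (hinv : numInvolutions Γ = 1) :
    ¬ ∃ A : Fin c → Fin m → Fin n → Option Γ, IsPartialMRS m n s k c A :=
  stmt2_general m n s k c hkodd Γ hcard hinv
end

section
/- Let m,n,s,c be positive integers with n·s odd, and let Γ be a finite abelian group of order 2·n·c. Then there is no Γ-magic rectangle set MRS_Γ(m,n;s,2;c). -/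
/-!
Double counting the cells of one array gives `m * s = 2 * n`, so `m = 2q` is even since `s` is
odd; double counting its sum gives `m • ω = n • δ`. Writing `n = 2r + 1`, this says
`δ = 2x` with `x = q • ω - r • δ`. The element `x` sits in a column with exactly one other
filled cell, whose entry must then be `δ - x = x` as well, contradicting that `x` occurs once.
-/

open Finset

section Array

variable {m n : ℕ}

theorem mul_eq_mul_of_card_filled {α : Type*} (B : Fin m → Fin n → Option α) {s k : ℕ}
    (hrow : ∀ i, (univ.filter fun j => (B i j).isSome).card = s)
    (hcol : ∀ j, (univ.filter fun i => (B i j).isSome).card = k) :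
    m * s = n * k := by
  classical
  simpa using card_mul_eq_card_mul (fun i j => (B i j).isSome) (s := univ) (t := univ)
    (fun i _ => hrow i) (fun j _ => hcol j)

variable {Γ : Type*} [AddCommGroup Γ]

theorem smul_eq_smul_of_sum_rows_cols (f : Fin m → Fin n → Γ) {ω δ : Γ}
    (hrow : ∀ i, ∑ j, f i j = ω) (hcol : ∀ j, ∑ i, f i j = δ) :
    m • ω = n • δ := by
  calc m • ω = ∑ i, ∑ j, f i j := by simp [hrow]
    _ = ∑ j, ∑ i, f i j := sum_comm
    _ = n • δ := by simp [hcol]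

theorem sum_getD_eq_sum_filter_isSome (v : Fin m → Option Γ) :
    ∑ i, (v i).getD 0 = ∑ i ∈ univ.filter fun i => (v i).isSome, (v i).getD 0 := by
  refine (sum_subset (subset_univ _) fun i _ hi => ?_).symm
  simp_all

theorem exists_ne_eq_some_sub_of_card_filled_eq_two (v : Fin m → Option Γ) {δ x : Γ} {i : Fin m}
    (hcard : (univ.filter fun i => (v i).isSome).card = 2) (hsum : ∑ i, (v i).getD 0 = δ)
    (hi : v i = some x) :
    ∃ i' ≠ i, v i' = some (δ - x) := by
  set S := univ.filter fun i => (v i).isSome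
  have hiS : i ∈ S := by simp [S, hi]
  obtain ⟨i', hS'⟩ := card_eq_one.mp (by rw [card_erase_of_mem hiS, hcard] : (S.erase i).card = 1)
  have hi'S : i' ∈ S.erase i := by simp [hS']
  obtain ⟨hne, hi'⟩ := mem_erase.mp hi'S
  obtain ⟨y, hy⟩ := Option.isSome_iff_exists.mp (mem_filter.mp hi').2
  refine ⟨i', hne, ?_⟩
  rw [sum_getD_eq_sum_filter_isSome, ← add_sum_erase S _ hiS, hS', sum_singleton, hi, hy] at hsum
  rw [hy, ← hsum, Option.getD_some, Option.getD_some, add_sub_cancel_left]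

end Array

theorem sub_eq_of_even_smul_eq_odd_smul {Γ : Type*} [AddCommGroup Γ] {ω δ : Γ} {q r : ℕ}
    (h : (q + q) • ω = (2 * r + 1) • δ) :
    δ - (q • ω - r • δ) = q • ω - r • δ := by
  rw [sub_eq_iff_eq_add]
  calc δ = (q + q) • ω - (2 * r) • δ := by rw [h, add_smul, one_smul, add_sub_cancel_left]
    _ = _ := by simp only [add_smul, two_mul]; abel

theorem stmt4_general (m n s c : ℕ)
    (hodd : Odd (n * s))
    (Γ : Type*) [AddCommGroup Γ] :
    ¬ ∃ A : Fin c → Fin m → Fin n → Option Γ, IsPartialMRS m n s 2 c A := by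
  rintro ⟨A, huniq, hrow, hcol, ω, δ, hrω, hcδ⟩
  obtain ⟨hn, hs⟩ := Nat.odd_mul.mp hodd
  -- `0 : Γ` is placed somewhere, so there is at least one array
  obtain ⟨⟨t₀, -, -⟩, -, -⟩ := huniq 0
  have hcells : m * s = n * 2 := mul_eq_mul_of_card_filled (A t₀) (hrow t₀) (hcol t₀)
  have hm : Even m := (Nat.even_mul.mp (hcells ▸ Nat.even_mul.mpr (Or.inr even_two))).resolve_right
    (Nat.not_even_iff_odd.mpr hs)
  obtain ⟨q, rfl⟩ := hm
  obtain ⟨r, rfl⟩ := hn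
  have hδ := sub_eq_of_even_smul_eq_odd_smul
    (smul_eq_smul_of_sum_rows_cols (fun i j => (A t₀ i j).getD 0) (hrω t₀) (hcδ t₀))
  obtain ⟨⟨t, i, j⟩, hx, hx_uniq⟩ := huniq (q • ω - r • δ)
  obtain ⟨i', hne, hi'⟩ :=
    exists_ne_eq_some_sub_of_card_filled_eq_two (fun i => A t i j) (hcol t j) (hcδ t j) hx
  rw [hδ] at hi'
  exact hne (congrArg (·.2.1) (hx_uniq (t, i', j) hi'))

/-- Let `Γ` be an abelian group of order `2·n·c`. If `n·s` is odd, then there is no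
`MRS_Γ(m,n;s,2;c)`. -/
theorem stmt4 (m n s c : ℕ) (hm : 0 < m) (hn : 0 < n) (hs : 0 < s) (hc : 0 < c)
    (hodd : Odd (n * s))
    (Γ : Type*) [AddCommGroup Γ] [Fintype Γ] (hcard : Fintype.card Γ = 2 * n * c) :
    ¬ ∃ A : Fin c → Fin m → Fin n → Option Γ, IsPartialMRS m n s 2 c A :=
  stmt4_general m n s c hodd Γ
end

section
/- Let a ≥ 1 be an integer and let Ω be a subset of Z_{2a} such that every g ∈ Ω has order greater than 2 and −g ∈ Ω whenever g ∈ Ω. Let Ψ be a finite abelian group of order 2^α with α ≥ 2. Then there exists a collection of |Ω|/2 arrays of size 2 × 2^α with entries in Z_{2a} ⊕ Ψ such that in every array the sum of the entries of each row and of each column equals 0, and the entries of all the arrays taken together are, each exactly once, precisely the elements of the set {(x,y) : x ∈ Ω, y ∈ Ψ} ⊆ Z_{2a} ⊕ Ψ. -/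
/-!
Pair each `x ∈ Ω` with `-x` and give the pair one block whose column `y ∈ Ψ` is
`(ε y • (x, y), -ε y • (x, y))` for signs `ε y = ±1`. Such a block contains every element of
`{x, -x} × Ψ` exactly once, and its columns sum to zero. Its rows sum to zero as soon as
`B = {y | ε y = 1}` and `Bᶜ` have the same size and the same sum. To get such a `B`, take an
element `z` of order two and keep one of `y`, `y + z` from each pair. Then `Bᶜ = B + z`, so the
two sums differ by `#B • z`, which is `0` because `#B = |Ψ| / 2` is even.
-/

open Finset

namespace Function.Involutive

variable {X : Type*} {f : X → X} {s A : Finset X}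

theorem exists_subset_apply_mem_iff_notMem (hf : Involutive f) (hs : ∀ x ∈ s, f x ∈ s)
    (hfix : ∀ x ∈ s, f x ≠ x) : ∃ A ⊆ s, ∀ x ∈ s, f x ∈ A ↔ x ∉ A := by
  classical
  -- keep the smaller element of each pair `{x, f x}` for an arbitrary well-order
  let r : X → X → Prop := WellOrderingRel
  refine ⟨s.filter fun x => r x (f x), filter_subset _ _, fun x hx => ?_⟩
  simp only [mem_filter, hs x hx, hx, true_and, hf x]
  rcases trichotomous_of r x (f x) with h | h | h
  · exact iff_of_false (asymm h) (not_not_intro h)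
  · exact absurd h.symm (hfix x hx)
  · exact iff_of_true h (asymm h)

theorem sum_sdiff_eq_sum_apply [DecidableEq X] {M : Type*} [AddCommMonoid M] (hf : Involutive f)
    (hs : ∀ x ∈ s, f x ∈ s) (hAs : A ⊆ s) (hA : ∀ x ∈ s, f x ∈ A ↔ x ∉ A) (g : X → M) :
    ∑ x ∈ s \ A, g x = ∑ x ∈ A, g (f x) := by
  refine sum_nbij' f f (fun x hx => ?_) (fun x hx => ?_) (fun x _ => hf x) (fun x _ => hf x)
    (fun x _ => by rw [hf x])
  · rw [mem_sdiff] at hx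
    exact (hA x hx.1).2 hx.2
  · have hx' := hAs hx
    refine mem_sdiff.2 ⟨hs x hx', fun h => ?_⟩
    exact (hA (f x) (hs x hx')).1 (by rwa [hf x]) h

theorem card_sdiff_eq_card [DecidableEq X] (hf : Involutive f)
    (hs : ∀ x ∈ s, f x ∈ s) (hAs : A ⊆ s) (hA : ∀ x ∈ s, f x ∈ A ↔ x ∉ A) :
    #(s \ A) = #A := by
  simpa only [card_eq_sum_ones] using hf.sum_sdiff_eq_sum_apply hs hAs hA (fun _ => 1)

end Function.Involutive

theorem neg_ne_self_of_two_lt_addOrderOf {G : Type*} [AddGroup G] {g : G}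
    (hg : 2 < addOrderOf g) : -g ≠ g := by
  intro h
  have h2 : 2 • g = 0 := by
    rw [two_nsmul]
    nth_rewrite 1 [← h]
    exact neg_add_cancel g
  have := addOrderOf_le_of_nsmul_eq_zero two_pos h2
  omega

theorem exists_card_eq_card_compl_and_sum_eq_sum_compl {Ψ : Type*} [AddCommGroup Ψ] [Fintype Ψ]
    [DecidableEq Ψ] (h4 : 4 ∣ Fintype.card Ψ) :
    ∃ B : Finset Ψ, #B = #Bᶜ ∧ ∑ y ∈ B, y = ∑ y ∈ Bᶜ, y := by
  have : Fact (Nat.Prime 2) := ⟨Nat.prime_two⟩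
  obtain ⟨z, hz⟩ := exists_prime_addOrderOf_dvd_card 2 (dvd_trans (by norm_num) h4)
  have hz2 : 2 • z = 0 := hz ▸ addOrderOf_nsmul_eq_zero z
  have hf : Function.Involutive (· + z) := fun y => by
    show y + z + z = y
    rw [add_assoc, ← two_nsmul, hz2, add_zero]
  have hfix : ∀ y : Ψ, y + z ≠ y := fun y h => by
    simp [add_eq_left.1 h] at hz
  obtain ⟨B, -, hB⟩ := hf.exists_subset_apply_mem_iff_notMem (s := univ) (fun _ _ => mem_univ _)
    (fun y _ => hfix y)
  have hsum : ∑ y ∈ Bᶜ, y = ∑ y ∈ B, (y + z) := by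
    rw [compl_eq_univ_sdiff]
    exact hf.sum_sdiff_eq_sum_apply (fun _ _ => mem_univ _) (subset_univ B)
      (fun y _ => hB y (mem_univ y)) (fun y => y)
  have hcard : #Bᶜ = #B := by
    rw [compl_eq_univ_sdiff]
    exact hf.card_sdiff_eq_card (fun _ _ => mem_univ _) (subset_univ B)
      (fun y _ => hB y (mem_univ y))
  obtain ⟨k, hk⟩ : 2 ∣ #B := by
    have := card_add_card_compl B
    omega
  refine ⟨B, hcard.symm, ?_⟩
  rw [hsum, sum_add_distrib, sum_const, hk, mul_nsmul, hz2, nsmul_zero, add_zero]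

theorem Fintype.existsUnique_of_surjOn_of_card_le {ι β : Type*} [Fintype ι] {F : ι → β}
    {S : Finset β} (hmaps : ∀ q, F q ∈ S) (hsurj : ∀ p ∈ S, ∃ q, F q = p)
    (hcard : Fintype.card ι ≤ #S) : ∀ p ∈ S, ∃! q, F q = p := by
  have hinj := inj_on_of_surj_on_of_card_le (s := univ) (fun q _ => F q) (fun q _ => hmaps q)
    (fun p hp => (hsurj p hp).imp fun q hq => ⟨mem_univ q, hq⟩) hcard
  intro p hp
  obtain ⟨q, hq⟩ := hsurj p hp
  exact ⟨q, hq, fun q' hq' => hinj (mem_univ q') (mem_univ q) (hq'.trans hq.symm)⟩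

section SignedBlock

variable {G Ψ : Type*} [AddCommGroup G] [AddCommGroup Ψ] [DecidableEq Ψ]

def signedEntry (B : Finset Ψ) (g : G) (y : Ψ) : G × Ψ :=
  if y ∈ B then (g, y) else -(g, y)

def signedBlock (B : Finset Ψ) (g : G) (i : Fin 2) (y : Ψ) : G × Ψ :=
  ![signedEntry B g y, -signedEntry B g y] i

variable {B : Finset Ψ}

theorem sum_signedBlock_fin_two (g : G) (y : Ψ) : ∑ i, signedBlock B g i y = 0 := by
  simp [signedBlock]

theorem sum_signedBlock [Fintype Ψ] (hcard : #B = #Bᶜ) (hsum : ∑ y ∈ B, y = ∑ y ∈ Bᶜ, y)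
    (g : G) (i : Fin 2) : ∑ y, signedBlock B g i y = 0 := by
  have hrow : ∑ y, signedEntry B g y = 0 := by
    simp only [signedEntry]
    rw [sum_ite, filter_mem_eq_inter, univ_inter, filter_notMem_eq_sdiff,
      ← compl_eq_univ_sdiff, sum_neg_distrib, ← sub_eq_add_neg, sub_eq_zero]
    ext <;> simp only [Prod.fst_sum, Prod.snd_sum, sum_const, hcard, hsum]
  fin_cases i <;> simp [signedBlock, sum_neg_distrib, hrow]

theorem signedBlock_fst_eq_or_eq_neg (g : G) (i : Fin 2) (y : Ψ) :
    (signedBlock B g i y).1 = g ∨ (signedBlock B g i y).1 = -g := by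
  fin_cases i <;> by_cases hy : y ∈ B <;> simp [signedBlock, signedEntry, hy]

theorem exists_signedBlock_eq_mk (g : G) (y : Ψ) : ∃ i, signedBlock B g i y = (g, y) := by
  by_cases hy : y ∈ B
  exacts [⟨0, by simp [signedBlock, signedEntry, hy]⟩, ⟨1, by simp [signedBlock, signedEntry, hy]⟩]

theorem exists_signedBlock_eq_neg_mk (g : G) (y : Ψ) : ∃ i, signedBlock B g i y = -(g, y) := by
  by_cases hy : y ∈ B
  exacts [⟨1, by simp [signedBlock, signedEntry, hy]⟩, ⟨0, by simp [signedBlock, signedEntry, hy]⟩]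

end SignedBlock

theorem exists_zero_sum_blocks {G Ψ : Type*} [AddCommGroup G] [AddCommGroup Ψ] [Fintype Ψ]
    (Ω : Finset G) (hΩ : ∀ g ∈ Ω, -g ≠ g ∧ -g ∈ Ω) {m : ℕ} (hm : Fintype.card Ψ = m)
    (h4 : 4 ∣ m) :
    ∃ T : Fin (#Ω / 2) → Fin 2 → Fin m → G × Ψ,
      (∀ t i, ∑ j, T t i j = 0) ∧ (∀ t j, ∑ i, T t i j = 0) ∧ (∀ t i j, (T t i j).1 ∈ Ω) ∧
      (∀ p : G × Ψ, p.1 ∈ Ω → ∃! q : Fin (#Ω / 2) × Fin 2 × Fin m, T q.1 q.2.1 q.2.2 = p) := by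
  classical
  obtain ⟨A, hAΩ, hA⟩ := neg_involutive.exists_subset_apply_mem_iff_notMem
    (fun g hg => (hΩ g hg).2) (fun g hg => (hΩ g hg).1)
  have hcardΩ : #Ω = 2 * #A := by
    have := neg_involutive.card_sdiff_eq_card (fun g hg => (hΩ g hg).2) hAΩ hA
    have := card_sdiff_add_card_eq_card hAΩ
    omega
  obtain ⟨B, hBcard, hBsum⟩ := exists_card_eq_card_compl_and_sum_eq_sum_compl (hm ▸ h4)
  let x : Fin (#Ω / 2) ≃ A := (A.equivFinOfCardEq (by omega)).symm
  let e : Fin m ≃ Ψ := (Fintype.equivFinOfCardEq hm).symm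
  let T : Fin (#Ω / 2) → Fin 2 → Fin m → G × Ψ := fun t i j => signedBlock B (x t : G) i (e j)
  have hmem : ∀ t i j, (T t i j).1 ∈ Ω := fun t i j => by
    have hx := hAΩ (x t).2
    rcases signedBlock_fst_eq_or_eq_neg (B := B) (x t : G) i (e j) with h | h <;>
      simp only [T, h, hx, (hΩ _ hx).2]
  have hsurj : ∀ p ∈ Ω ×ˢ univ, ∃ q : Fin (#Ω / 2) × Fin 2 × Fin m, T q.1 q.2.1 q.2.2 = p := by
    rintro ⟨g, y⟩ hp
    have hg := (mem_product.1 hp).1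
    by_cases hgA : g ∈ A
    · obtain ⟨i, hi⟩ := exists_signedBlock_eq_mk (B := B) g y
      exact ⟨(x.symm ⟨g, hgA⟩, i, e.symm y), by simpa [T] using hi⟩
    · obtain ⟨i, hi⟩ := exists_signedBlock_eq_neg_mk (B := B) (-g) (-y)
      refine ⟨(x.symm ⟨-g, (hA g hg).2 hgA⟩, i, e.symm (-y)), ?_⟩
      simpa [T] using hi
  refine ⟨T, fun t i => ?_, fun t j => sum_signedBlock_fin_two _ _, hmem, fun p hp => ?_⟩
  · exact (e.sum_comp _).trans (sum_signedBlock hBcard hBsum _ i)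
  refine Fintype.existsUnique_of_surjOn_of_card_le (S := Ω ×ˢ univ)
    (fun q => mem_product.2 ⟨hmem _ _ _, mem_univ _⟩) hsurj ?_ p (mem_product.2 ⟨hp, mem_univ _⟩)
  simp only [Fintype.card_prod, Fintype.card_fin, card_product, card_univ, hm, hcardΩ,
    Nat.mul_div_cancel_left _ two_pos]
  exact (by ring : _ = _).le

theorem stmt6_general (a : ℕ) (Ω : Finset (ZMod (2 * a)))
    (hΩ : ∀ g ∈ Ω, 2 < addOrderOf g ∧ -g ∈ Ω)
    (α : ℕ) (hα : 2 ≤ α) (Ψ : Type*) [AddCommGroup Ψ] [Fintype Ψ]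
    (hΨ : Fintype.card Ψ = 2 ^ α) :
    ∃ T : Fin (Ω.card / 2) → Fin 2 → Fin (2 ^ α) → ZMod (2 * a) × Ψ,
      (∀ t : Fin (Ω.card / 2), ∀ i : Fin 2, (∑ j : Fin (2 ^ α), T t i j) = 0) ∧
      (∀ t : Fin (Ω.card / 2), ∀ j : Fin (2 ^ α), (∑ i : Fin 2, T t i j) = 0) ∧
      (∀ t i j, (T t i j).1 ∈ Ω) ∧
      (∀ p : ZMod (2 * a) × Ψ, p.1 ∈ Ω →
        ∃! q : Fin (Ω.card / 2) × Fin 2 × Fin (2 ^ α), T q.1 q.2.1 q.2.2 = p) :=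
  exists_zero_sum_blocks Ω
    (fun g hg => ⟨neg_ne_self_of_two_lt_addOrderOf (hΩ g hg).1, (hΩ g hg).2⟩) hΨ
    (pow_dvd_pow 2 hα)

/-- Let `Ω ⊆ Z_{2a}` be such that every `g ∈ Ω` has order `> 2` and `-g ∈ Ω` whenever
`g ∈ Ω`. Let `Ψ` be an abelian group of order `2^α` with `α ≥ 2`. Then there exists a set of
`|Ω|/2` zero-sum blocks of size `2 × 2^α` whose entries are exactly the elements of
`{(x,y) : x ∈ Ω, y ∈ Ψ} ⊆ Z_{2a} ⊕ Ψ`, each appearing once and in a unique block. -/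
theorem stmt6 (a : ℕ) (ha : 1 ≤ a) (Ω : Finset (ZMod (2 * a)))
    (hΩ : ∀ g ∈ Ω, 2 < addOrderOf g ∧ -g ∈ Ω)
    (α : ℕ) (hα : 2 ≤ α) (Ψ : Type*) [AddCommGroup Ψ] [Fintype Ψ]
    (hΨ : Fintype.card Ψ = 2 ^ α) :
    ∃ T : Fin (Ω.card / 2) → Fin 2 → Fin (2 ^ α) → ZMod (2 * a) × Ψ,
      (∀ t : Fin (Ω.card / 2), ∀ i : Fin 2, (∑ j : Fin (2 ^ α), T t i j) = 0) ∧
      (∀ t : Fin (Ω.card / 2), ∀ j : Fin (2 ^ α), (∑ i : Fin 2, T t i j) = 0) ∧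
      (∀ t i j, (T t i j).1 ∈ Ω) ∧
      (∀ p : ZMod (2 * a) × Ψ, p.1 ∈ Ω →
        ∃! q : Fin (Ω.card / 2) × Fin 2 × Fin (2 ^ α), T q.1 q.2.1 q.2.2 = p) :=
  stmt6_general a Ω hΩ α hα Ψ hΨ
end

section
/- Let r ≥ 3 be an odd integer and let Γ = Z_{4r} ⊕ Z_4. Then there exists a zero-sum Γ-magic rectangle set MRS_Γ(r,8;2). -/
/-
By the Chinese remainder theorem Γ ≅ (Z₄ × Z₄) × Z_r. Row `i` of the two arrays lists every
element of Z₄ × Z₄ exactly once, paired with `±i ∈ Z_r`; in the rows `i ≠ 0` the sign of a cell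
depends only on its Z₄ × Z₄ entry, so an element `(g, u)` with `u ≠ 0` occurs exactly once, in
row `±u`, and one with `u = 0` exactly once, in row 0. Every row of signs is balanced and
`∑ i ≡ 0 (mod r)` for odd `r`, so the Z_r coordinate is zero-sum. The Z₄ × Z₄ patterns are
zero-sum along rows, and along columns because all rows but 0 and 2 carry the same pattern,
`4 • g = 0`, and row 0 is chosen according to `r mod 4`.
-/

open Finset

/-- A zero-sum Γ-magic rectangle set `MRS_Γ(a,b;c)`. -/
def IsZeroSumFullMRS {Γ : Type*} [AddCommGroup Γ] (a b c : ℕ)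
    (A : Fin c → Fin a → Fin b → Γ) : Prop :=
  (Function.Bijective fun p : Fin c × Fin a × Fin b => A p.1 p.2.1 p.2.2) ∧
  (∀ t : Fin c, ∀ i : Fin a, (∑ j : Fin b, A t i j) = 0) ∧
  (∀ t : Fin c, ∀ j : Fin b, (∑ i : Fin a, A t i j) = 0)

theorem sum_univ_eq_zero_of_odd_card {G : Type*} [AddCommGroup G] [Fintype G]
    (h : Odd (Fintype.card G)) : ∑ x : G, x = 0 := by
  set S := ∑ x : G, x
  have two_smul_S : 2 • S = 0 := by
    have neg_S : -S = S := by
      rw [← sum_neg_distrib]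
      exact Equiv.sum_comp (Equiv.neg G) id
    rw [two_nsmul]
    nth_rewrite 1 [← neg_S]
    exact neg_add_cancel S
  obtain ⟨m, hm⟩ := h
  calc S = Fintype.card G • S - m • (2 • S) := by
        rw [hm, add_nsmul, one_nsmul, mul_nsmul]
        abel
    _ = 0 := by
        rw [← Nat.card_eq_fintype_card, card_nsmul_eq_zero', two_smul_S, nsmul_zero, sub_zero]

theorem IsZeroSumFullMRS.map_addEquiv {Γ Γ' : Type*} [AddCommGroup Γ] [AddCommGroup Γ']
    {a b c : ℕ} {A : Fin c → Fin a → Fin b → Γ} (hA : IsZeroSumFullMRS a b c A) (e : Γ ≃+ Γ') :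
    IsZeroSumFullMRS a b c fun t i j => e (A t i j) := by
  obtain ⟨hbij, hrow, hcol⟩ := hA
  exact ⟨e.bijective.comp hbij, fun t i => by rw [← map_sum, hrow, map_zero],
    fun t j => by rw [← map_sum, hcol, map_zero]⟩

theorem isZeroSumFullMRS_prod_zmod {H : Type*} [AddCommGroup H] [Fintype H] {r b c : ℕ}
    [NeZero r] (hr : Odd r) (P : Fin r → Fin c → Fin b → H) (ε : Fin c → Fin b → ℤˣ)
    (σ : H → ℤˣ) (hP : ∀ i, Function.Bijective fun p : Fin c × Fin b => P i p.1 p.2)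
    (hrow : ∀ i t, ∑ j, P i t j = 0) (hcol : ∀ t j, ∑ i, P i t j = 0)
    (hε : ∀ t, ∑ j, (ε t j : ℤ) = 0) (hσ : ∀ i, i ≠ 0 → ∀ t j, σ (P i t j) = ε t j) :
    IsZeroSumFullMRS r b c fun t i j => (P i t j, ε t j • ZMod.finEquiv r i) := by
  set e := ZMod.finEquiv r
  refine ⟨(Fintype.bijective_iff_injective_and_card _).2 ⟨?_, ?_⟩, fun t i => ?_, fun t j => ?_⟩
  · rintro ⟨t, i, j⟩ ⟨t', i', j'⟩ h
    simp only [Prod.mk.injEq] at h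
    obtain ⟨hg, hu⟩ := h
    have hzero : i = 0 ↔ i' = 0 := by
      rw [← map_eq_zero_iff e e.injective, ← smul_eq_zero_iff_eq (ε t j), hu,
        smul_eq_zero_iff_eq, map_eq_zero_iff e e.injective]
    have hi : i = i' := by
      by_cases h0 : i = 0
      · exact h0.trans (hzero.1 h0).symm
      · have h0' : i' ≠ 0 := fun h => h0 (hzero.2 h)
        rw [← hσ i h0, hg, hσ i' h0', smul_left_cancel_iff] at hu
        exact e.injective hu
    subst hi
    obtain ⟨rfl, rfl⟩ := Prod.mk.inj ((hP i).1 (a₁ := (t, j)) (a₂ := (t', j')) hg)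
    rfl
  · have hH : Fintype.card (Fin c × Fin b) = Fintype.card H := Fintype.card_of_bijective (hP 0)
    simp only [Fintype.card_prod, Fintype.card_fin, ZMod.card] at hH ⊢
    rw [← hH]
    ring
  · refine Prod.ext ?_ ?_
    · rw [Prod.fst_sum]
      exact hrow i t
    · rw [Prod.snd_sum]
      simp only [Units.smul_def, ← sum_smul, hε, zero_smul, Prod.snd_zero]
  · refine Prod.ext ?_ ?_
    · rw [Prod.fst_sum]
      exact hcol t j
    · rw [Prod.snd_sum, ← smul_sum,
        Fintype.sum_bijective e e.bijective _ (fun x => x) fun _ => rfl,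
        sum_univ_eq_zero_of_odd_card (by rwa [ZMod.card]), smul_zero, Prod.snd_zero]

def ZMod.prodProdEquivOfCoprime (H : Type*) [AddCommGroup H] {m n : ℕ} (h : m.Coprime n) :
    (ZMod m × H) × ZMod n ≃+ ZMod (m * n) × H :=
  (AddEquiv.prodAssoc.trans ((AddEquiv.refl _).prodCongr AddEquiv.prodComm)).trans
    (AddEquiv.prodAssoc.symm.trans
      ((ZMod.chineseRemainder h).symm.toAddEquiv.prodCongr (AddEquiv.refl _)))

abbrev Z4Sq : Type := ZMod 4 × ZMod 4

def genericRow : Fin 2 → Fin 8 → Z4Sq :=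
  ![![(0, 0), (0, 1), (0, 2), (1, 0), (0, 3), (2, 1), (2, 2), (3, 3)],
    ![(1, 1), (1, 2), (1, 3), (2, 0), (2, 3), (3, 0), (3, 1), (3, 2)]]

def secondRow : Fin 2 → Fin 8 → Z4Sq :=
  ![![(0, 1), (1, 0), (0, 0), (3, 0), (3, 2), (3, 3), (0, 3), (2, 3)],
    ![(2, 1), (1, 2), (2, 0), (0, 2), (1, 1), (1, 3), (2, 2), (3, 1)]]

def zeroRow₁ : Fin 2 → Fin 8 → Z4Sq :=
  ![![(0, 3), (3, 1), (0, 2), (2, 0), (1, 1), (3, 2), (2, 3), (1, 0)],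
    ![(3, 0), (0, 0), (3, 3), (2, 2), (1, 2), (2, 1), (1, 3), (0, 1)]]

def zeroRow₃ : Fin 2 → Fin 8 → Z4Sq :=
  ![![(0, 3), (3, 3), (0, 2), (0, 0), (1, 3), (3, 0), (2, 3), (3, 2)],
    ![(1, 2), (2, 0), (1, 1), (2, 2), (1, 0), (0, 1), (3, 1), (2, 1)]]

def rowPattern (r i : ℕ) : Fin 2 → Fin 8 → Z4Sq :=
  if i = 0 then if r % 4 = 1 then zeroRow₁ else zeroRow₃
  else if i = 2 then secondRow else genericRow

def signs : Fin 2 → Fin 8 → ℤˣ :=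
  ![![1, 1, 1, 1, -1, -1, -1, -1], ![-1, 1, 1, 1, -1, 1, -1, -1]]

def valueSign (g : Z4Sq) : ℤˣ :=
  if g ∈ ({(0, 0), (0, 1), (0, 2), (1, 0), (1, 2), (1, 3), (2, 0), (3, 0)} : Finset Z4Sq) then 1
  else -1

theorem rowPattern_bijective (r i : ℕ) :
    Function.Bijective fun p : Fin 2 × Fin 8 => rowPattern r i p.1 p.2 := by
  unfold rowPattern
  split_ifs <;> decide

theorem sum_rowPattern_eq_zero (r i : ℕ) (t : Fin 2) : ∑ j, rowPattern r i t j = 0 := by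
  unfold rowPattern
  split_ifs <;> revert t <;> decide

theorem valueSign_rowPattern (r : ℕ) {i : ℕ} (hi : i ≠ 0) (t : Fin 2) (j : Fin 8) :
    valueSign (rowPattern r i t j) = signs t j := by
  simp only [rowPattern, if_neg hi]
  split_ifs <;> revert t j <;> decide

theorem sum_signs_eq_zero (t : Fin 2) : ∑ j, (signs t j : ℤ) = 0 := by
  revert t
  decide

theorem four_nsmul_z4Sq (g : Z4Sq) : 4 • g = 0 := by
  revert g
  decide

theorem zeroRow₁_add_genericRow_add_secondRow (t : Fin 2) (j : Fin 8) :
    zeroRow₁ t j + genericRow t j + secondRow t j + 2 • genericRow t j = 0 := by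
  revert t j
  decide

theorem zeroRow₃_add_genericRow_add_secondRow (t : Fin 2) (j : Fin 8) :
    zeroRow₃ t j + genericRow t j + secondRow t j = 0 := by
  revert t j
  decide

theorem sum_rowPattern_col_eq_zero {r : ℕ} (hr : 3 ≤ r) (hodd : Odd r) (t : Fin 2)
    (j : Fin 8) :
    ∑ i : Fin r, rowPattern r i t j = 0 := by
  have htail : ∑ i ∈ Ico 3 r, rowPattern r i t j = (r - 3) • genericRow t j := by
    rw [← Nat.card_Ico, ← sum_const]
    refine sum_congr rfl fun i hi => ?_
    have := (mem_Ico.1 hi).1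
    simp only [rowPattern, if_neg (show i ≠ 0 by omega), if_neg (show i ≠ 2 by omega)]
  rw [Fin.sum_univ_eq_sum_range (fun i => rowPattern r i t j), ← sum_range_add_sum_Ico _ hr,
    htail, nsmul_eq_mod_nsmul _ (four_nsmul_z4Sq _)]
  simp only [sum_range_succ, sum_range_zero, zero_add, rowPattern, if_true, one_ne_zero,
    two_ne_zero, if_false, OfNat.one_ne_ofNat]
  rcases Nat.odd_mod_four_iff.1 (Nat.odd_iff.1 hodd) with h | h
  · rw [show (r - 3) % 4 = 2 by omega, if_pos h]
    exact zeroRow₁_add_genericRow_add_secondRow t j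
  · rw [show (r - 3) % 4 = 0 by omega, if_neg (by omega), zero_nsmul, add_zero]
    exact zeroRow₃_add_genericRow_add_secondRow t j

/-- Let `r ≥ 3` be an odd integer and let `Γ = Z_{4r} ⊕ Z_4`. Then there exists a zero-sum
`MRS_Γ(r,8;2)`. -/
theorem stmt7 (r : ℕ) (hr : 3 ≤ r) (hodd : Odd r) :
    ∃ A : Fin 2 → Fin r → Fin 8 → ZMod (4 * r) × ZMod 4,
      IsZeroSumFullMRS r 8 2 A := by
  have : NeZero r := ⟨by omega⟩
  have hcop : Nat.Coprime 4 r := Nat.Coprime.pow_left 2 (Nat.coprime_two_left.2 hodd)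
  have hMRS := isZeroSumFullMRS_prod_zmod hodd (fun i => rowPattern r i) signs valueSign
    (fun i => rowPattern_bijective r i) (fun i => sum_rowPattern_eq_zero r i)
    (sum_rowPattern_col_eq_zero hr hodd) sum_signs_eq_zero
    (fun i hi => valueSign_rowPattern r (Fin.val_ne_zero_iff.2 hi))
  exact ⟨_, hMRS.map_addEquiv (ZMod.prodProdEquivOfCoprime (ZMod 4) hcop)⟩
end

section
/- Let r ≥ 3 be an odd integer and let Γ = Z_{2r} ⊕ Z_2 ⊕ Z_2 ⊕ Z_2. Then there exists a zero-sum Γ-magic rectangle set MRS_Γ(r,8;2). -/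
open Finset

/-!
By the Chinese remainder theorem `Γ ≅ ℤ_r × 𝔽₁₆` as groups. In array `t`, row `x ∈ ℤ_r`,
column `j`, put `(z, τ_z d(t,j))` where `z = ε_j x` with column signs `ε_j = 1` for `j < 4` and
`ε_j = -1` for `j ≥ 4`, `(t,j) ↦ d(t,j)` is a bijection onto `𝔽₁₆`, and `τ_z` is
multiplication by `g` if `z = 1`, by `1 + g` if `z = -1`, and the identity otherwise.
As `x ↦ ε_j x` is bijective, every `z` is hit by exactly the 16 pairs `(t,j)`, whose
second coordinates `τ_z d(t,j)` exhaust `𝔽₁₆`. The `ℤ_r` parts of the rows sum to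
`x ∑ ε_j = 0`, those of the columns to `∑_{z ∈ ℤ_r} z = 0` (`r` odd). The `𝔽₁₆` part of a
column sums to `g u + (1 + g) u + (r - 2) u = (r - 1) u = 0`; that of a row is a finite check,
in the three cases `x = 1`, `x = -1` and `x ≠ ±1`.
-/

theorem IsZeroSumFullMRS.of_equiv {Γ Γ' ι : Type*} [AddCommGroup Γ] [AddCommGroup Γ']
    [Fintype ι] {a b c : ℕ} (e : Γ' ≃+ Γ) (σ : Fin a ≃ ι) (B : Fin c → ι → Fin b → Γ')
    (hbij : Function.Bijective fun p : Fin c × ι × Fin b => B p.1 p.2.1 p.2.2)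
    (hrow : ∀ t x, ∑ j, B t x j = 0) (hcol : ∀ t j, ∑ x, B t x j = 0) :
    IsZeroSumFullMRS a b c fun t i j => e (B t (σ i) j) := by
  refine ⟨e.bijective.comp (hbij.comp (Equiv.prodCongr (.refl _)
    (Equiv.prodCongr σ (.refl _))).bijective), fun t i => ?_, fun t j => ?_⟩
  · rw [← map_sum, hrow, map_zero]
  · rw [← map_sum, σ.sum_comp (B t · j), hcol, map_zero]

theorem ZMod.sum_univ_eq_zero_of_odd {r : ℕ} [NeZero r] (hodd : Odd r) : ∑ z : ZMod r, z = 0 := by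
  have hneg : ∑ z : ZMod r, z = -∑ z : ZMod r, z := by
    rw [← sum_neg_distrib]; exact (Equiv.sum_comp (Equiv.neg (ZMod r)) id).symm
  have htwo : IsUnit (2 : ZMod r) := by
    simpa using (ZMod.unitOfCoprime 2 (Nat.coprime_two_left.mpr hodd)).isUnit
  exact htwo.mul_right_eq_zero.mp (by linear_combination hneg)

/-- The additive group of `𝔽₁₆ = 𝔽₂[g]/(g⁴ + g + 1)`, in coordinates w.r.t. `1, g, g², g³`. -/
abbrev F16 : Type := ZMod 2 × ZMod 2 × ZMod 2 × ZMod 2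

namespace F16

def mulGen (c : F16) : F16 := (c.2.2.2, c.1 + c.2.2.2, c.2.1, c.2.2.1)

def mulGenAddOne (c : F16) : F16 := c + mulGen c

theorem mulGen_injective : Function.Injective mulGen := by decide

theorem mulGenAddOne_injective : Function.Injective mulGenAddOne := by decide

theorem mulGen_add_mulGenAddOne (c : F16) : mulGen c + mulGenAddOne c = c := by
  revert c; decide

theorem two_nsmul_eq_zero (c : F16) : 2 • c = 0 := by
  revert c; decide

def binDigits (t : Fin 2) (j : Fin 8) : F16 :=
  ((t : ℕ), ((j / 4 : ℕ) : ZMod 2), ((j / 2 : ℕ) : ZMod 2), (j : ℕ))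

theorem binDigits_inj {t t' : Fin 2} {j j' : Fin 8} (h : binDigits t j = binDigits t' j') :
    t = t' ∧ j = j' := by
  revert t t' j j'; decide

theorem sum_binDigits (t : Fin 2) : ∑ j, binDigits t j = 0 := by
  revert t; decide

theorem sum_mulGen_binDigits (t : Fin 2) :
    ∑ j : Fin 8, (if (j : ℕ) < 4 then mulGen else mulGenAddOne) (binDigits t j) = 0 := by
  revert t; decide

theorem sum_mulGenAddOne_binDigits (t : Fin 2) :
    ∑ j : Fin 8, (if (j : ℕ) < 4 then mulGenAddOne else mulGen) (binDigits t j) = 0 := by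
  revert t; decide

end F16

open F16

section Construction

variable {r : ℕ}

def colSign (r : ℕ) (j : Fin 8) : (ZMod r)ˣ := if (j : ℕ) < 4 then 1 else -1

theorem sum_colSign : ∑ j, (colSign r j : ZMod r) = 0 := by
  simp only [colSign, Fin.sum_univ_eight]; norm_num

def twist (z : ZMod r) : F16 → F16 :=
  if z = 1 then mulGen else if z = -1 then mulGenAddOne else id

theorem twist_one : twist (1 : ZMod r) = mulGen := if_pos rfl

theorem twist_neg_one [Fact (2 < r)] : twist (-1 : ZMod r) = mulGenAddOne := by
  simp [twist, ZMod.neg_one_ne_one]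

theorem twist_of_ne {z : ZMod r} (h₁ : z ≠ 1) (h₂ : z ≠ -1) : twist z = id := by
  simp [twist, h₁, h₂]

theorem twist_injective (z : ZMod r) : Function.Injective (twist z) := by
  unfold twist
  split_ifs
  exacts [mulGen_injective, mulGenAddOne_injective, Function.injective_id]

theorem twist_colSign_mul (j : Fin 8) (x : ZMod r) :
    twist (colSign r j * x : ZMod r) = if (j : ℕ) < 4 then twist x else twist (-x) := by
  unfold colSign; split_ifs <;> simp

theorem sum_twist_colSign_mul [Fact (2 < r)] (t : Fin 2) (x : ZMod r) :
    ∑ j, twist (colSign r j * x : ZMod r) (binDigits t j) = 0 := by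
  simp only [twist_colSign_mul]
  by_cases h₁ : x = 1
  · rw [h₁, twist_one, twist_neg_one]; exact sum_mulGen_binDigits t
  by_cases h₂ : x = -1
  · rw [h₂, neg_neg, twist_one, twist_neg_one]; exact sum_mulGenAddOne_binDigits t
  rw [twist_of_ne h₁ h₂, twist_of_ne (by rwa [Ne, neg_eq_iff_eq_neg]) (by rwa [Ne, neg_inj])]
  simpa using sum_binDigits t

theorem sum_twist [NeZero r] [Fact (2 < r)] (hodd : Odd r) (u : F16) :
    ∑ z : ZMod r, twist z u = 0 := by
  have hsupp : ∑ z : ZMod r, (twist z u - u) = (twist 1 u - u) + (twist (-1) u - u) :=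
    Fintype.sum_eq_add _ _ ZMod.neg_one_ne_one.symm fun z hz => by
      simp [twist_of_ne hz.1 hz.2]
  obtain ⟨m, rfl⟩ := hodd
  rw [sum_sub_distrib, sum_const, card_univ, ZMod.card, twist_one, twist_neg_one] at hsupp
  rw [sub_eq_iff_eq_add.mp hsupp, add_nsmul, mul_nsmul, two_nsmul_eq_zero, nsmul_zero, one_nsmul]
  linear_combination (norm := abel) mulGen_add_mulGenAddOne u

def mrsEntry (t : Fin 2) (x : ZMod r) (j : Fin 8) : ZMod r × F16 :=
  (colSign r j * x, twist (colSign r j * x : ZMod r) (binDigits t j))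

theorem bijective_mrsEntry [NeZero r] :
    Function.Bijective fun p : Fin 2 × ZMod r × Fin 8 => mrsEntry p.1 p.2.1 p.2.2 := by
  rw [Fintype.bijective_iff_injective_and_card]
  refine ⟨fun ⟨t, x, j⟩ ⟨t', x', j'⟩ h => ?_, by simp [ZMod.card]; ring⟩
  obtain ⟨hz, hu⟩ := Prod.ext_iff.mp h
  dsimp only [mrsEntry] at hz hu
  rw [hz] at hu
  obtain ⟨rfl, rfl⟩ := binDigits_inj (twist_injective _ hu)
  rw [Units.mul_right_inj] at hz
  rw [hz]

theorem sum_mrsEntry_row [Fact (2 < r)] (t : Fin 2) (x : ZMod r) :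
    ∑ j, mrsEntry t x j = 0 := by
  refine Prod.ext ?_ ?_
  · rw [Prod.fst_sum]; simp only [mrsEntry, ← sum_mul, sum_colSign, zero_mul, Prod.fst_zero]
  · rw [Prod.snd_sum]; exact sum_twist_colSign_mul t x

theorem sum_mrsEntry_col [NeZero r] [Fact (2 < r)] (hodd : Odd r) (t : Fin 2) (j : Fin 8) :
    ∑ x : ZMod r, mrsEntry t x j = 0 := by
  let f : ZMod r → ZMod r × F16 := fun z => (z, twist z (binDigits t j))
  calc ∑ x, mrsEntry t x j = ∑ x, f (Units.mulLeft (colSign r j) x) := rfl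
    _ = ∑ z, f z := Equiv.sum_comp _ f
    _ = 0 := Prod.ext (by rw [Prod.fst_sum]; exact ZMod.sum_univ_eq_zero_of_odd hodd)
      (by rw [Prod.snd_sum]; exact sum_twist hodd _)

def crtEquiv (h : Nat.Coprime 2 r) :
    ZMod r × F16 ≃+ ZMod (2 * r) × ZMod 2 × ZMod 2 × ZMod 2 where
  toFun p := ((ZMod.chineseRemainder h).symm (p.2.1, p.1), p.2.2)
  invFun q := ((ZMod.chineseRemainder h q.1).2, (ZMod.chineseRemainder h q.1).1, q.2)
  left_inv p := by simp
  right_inv q := by simp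
  map_add' p q := by simp [← map_add]

end Construction

/-- Let `r ≥ 3` be an odd integer and let `Γ = Z_{2r} ⊕ Z_2 ⊕ Z_2 ⊕ Z_2`. Then there exists a zero-sum
`MRS_Γ(r,8;2)`. -/
theorem stmt10 (r : ℕ) (hr : 3 ≤ r) (hodd : Odd r) :
    ∃ A : Fin 2 → Fin r → Fin 8 → ZMod (2 * r) × ZMod 2 × ZMod 2 × ZMod 2,
      IsZeroSumFullMRS r 8 2 A := by
  have : NeZero r := ⟨by omega⟩
  have : Fact (2 < r) := ⟨hr⟩
  exact ⟨_, .of_equiv (crtEquiv (Nat.coprime_two_left.mpr hodd)) (ZMod.finEquiv r).toEquiv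
    mrsEntry bijective_mrsEntry sum_mrsEntry_row (sum_mrsEntry_col hodd)⟩
end

section
/- Let n ≥ 2 and c ≥ 1 be integers and let Γ be a finite abelian group of order 2·n·c. Then a diagonal Γ-magic rectangle set MRS_Γ(n;2;c) exists if and only if Γ contains an element of order n. -/
/-!
Index rows and columns by `ZMod n`. If an array is filled on the diagonals `ℓ` and `ℓ + 1`,
row `z` holds `a z` and `b z`, and the column through `(z, z + ℓ + 1)` holds `b z` and
`a (z + 1)`. Equal row sums `ω` and column sums `δ` force `a (z + 1) = a z + (δ - ω)`, and as
the `a z` are distinct, `δ - ω` has order `n`.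

Conversely, let `g` have order `n` and `H = ⟨g⟩`. The quotient `Γ ⧸ H` has even order `2c`,
so some `s` is not of the form `y + y`, and the fixed-point-free involution `y ↦ s - y` splits
`Γ ⧸ H` into pairs `{y_t, s - y_t}`, `t < c`. Lifting `y_t` to `x_t` and `s` to `ω`, array `t`
carries `x_t + z g` on the main diagonal and `ω - x_t - z g` on the next one: its rows sum to
`ω`, its columns to `ω + g`, and the entries of all arrays together run through `Γ` once.
-/

open Finset

/-- A diagonal Γ-magic rectangle set `MRS_Γ(n;k;c)`: the filled cells of each array are
exactly those of `k` consecutive diagonals (indices mod `n`). -/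
def IsDiagonalMRS {Γ : Type*} [AddCommGroup Γ] (n k c : ℕ)
    (A : Fin c → Fin n → Fin n → Option Γ) : Prop :=
  IsPartialMRS n n k k c A ∧
  ∀ t : Fin c, ∃ ℓ : ZMod n, ∀ i j : Fin n,
    (A t i j).isSome = true ↔
      ∃ u : ℕ, u < k ∧ ((j : ℕ) : ZMod n) - ((i : ℕ) : ZMod n) = ℓ + (u : ZMod n)

open Function ZMod

theorem ZMod.finEquiv_apply {n : ℕ} [NeZero n] (i : Fin n) :
    finEquiv n i = ((i : ℕ) : ZMod n) := by
  cases n with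
  | zero => exact absurd rfl (NeZero.ne 0)
  | succ m => exact (Fin.cast_val_eq_self i).symm

theorem exists_lt_two_eq_add_iff {R : Type*} [AddMonoidWithOne R] (d ℓ : R) :
    (∃ u : ℕ, u < 2 ∧ d = ℓ + u) ↔ d = ℓ ∨ d = ℓ + 1 := by
  constructor
  · rintro ⟨u, hu, rfl⟩
    interval_cases u <;> simp
  · rintro (rfl | rfl)
    exacts [⟨0, by simp⟩, ⟨1, by simp⟩]

section TwoDiagonals

variable {n : ℕ} [NeZero n] [Nontrivial (ZMod n)] {M : Type*} [AddCommMonoid M]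
  {ℓ : ZMod n} {F : Fin n → Fin n → M}

theorem sum_row_eq_add_of_twoDiagonals
    (hF : ∀ i j, F i j ≠ 0 →
      finEquiv n j - finEquiv n i = ℓ ∨ finEquiv n j - finEquiv n i = ℓ + 1)
    (z : ZMod n) :
    ∑ j, F ((finEquiv n).symm z) j =
      F ((finEquiv n).symm z) ((finEquiv n).symm (z + ℓ)) +
        F ((finEquiv n).symm z) ((finEquiv n).symm (z + ℓ + 1)) := by
  refine Fintype.sum_eq_add _ _ ((finEquiv n).symm.injective.ne (add_ne_left.2 one_ne_zero).symm)
    fun j ⟨hj₀, hj₁⟩ => not_not.1 fun hj => ?_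
  rcases hF _ j hj with h | h <;> simp only [RingEquiv.apply_symm_apply] at h
  · exact hj₀ (by rw [RingEquiv.eq_symm_apply]; linear_combination h)
  · exact hj₁ (by rw [RingEquiv.eq_symm_apply]; linear_combination h)

theorem sum_col_eq_add_of_twoDiagonals
    (hF : ∀ i j, F i j ≠ 0 →
      finEquiv n j - finEquiv n i = ℓ ∨ finEquiv n j - finEquiv n i = ℓ + 1)
    (z : ZMod n) :
    ∑ i, F i ((finEquiv n).symm (z + ℓ + 1)) =
      F ((finEquiv n).symm z) ((finEquiv n).symm (z + ℓ + 1)) +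
        F ((finEquiv n).symm (z + 1)) ((finEquiv n).symm (z + 1 + ℓ)) := by
  rw [show z + 1 + ℓ = z + ℓ + 1 by ring]
  refine Fintype.sum_eq_add _ _ ((finEquiv n).symm.injective.ne (add_ne_left.2 one_ne_zero).symm)
    fun i ⟨hi₀, hi₁⟩ => not_not.1 fun hi => ?_
  rcases hF i _ hi with h | h <;> simp only [RingEquiv.apply_symm_apply] at h
  · exact hi₁ (by rw [RingEquiv.eq_symm_apply]; linear_combination -h)
  · exact hi₀ (by rw [RingEquiv.eq_symm_apply]; linear_combination -h)

end TwoDiagonals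

theorem addOrderOf_eq_of_injective_of_add_one {G : Type*} [AddLeftCancelMonoid G] {n : ℕ}
    {f : ZMod n → G} (hf : Injective f) {g : G} (hstep : ∀ z, f (z + 1) = f z + g) :
    addOrderOf g = n := by
  have hnsmul : ∀ m : ℕ, f m = f 0 + m • g := by
    intro m
    induction m with
    | zero => simp
    | succ m ih => rw [Nat.cast_succ, hstep, ih, succ_nsmul, add_assoc]
  have hdvd : ∀ m : ℕ, addOrderOf g ∣ m ↔ n ∣ m := fun m => by
    rw [addOrderOf_dvd_iff_nsmul_eq_zero, ← ZMod.natCast_eq_zero_iff, ← hf.eq_iff, hnsmul,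
      add_eq_left]
  exact Nat.dvd_antisymm ((hdvd n).2 dvd_rfl) ((hdvd _).1 dvd_rfl)

theorem exists_addOrderOf_eq_of_isDiagonalMRS {Γ : Type*} [AddCommGroup Γ] {n c : ℕ}
    (hn : 2 ≤ n) {A : Fin c → Fin n → Fin n → Option Γ} (hA : IsDiagonalMRS n 2 c A) :
    ∃ g : Γ, addOrderOf g = n := by
  have : NeZero n := ⟨by omega⟩
  have : Fact (1 < n) := ⟨hn⟩
  obtain ⟨⟨huniq, -, -, ω, δ, hrow, hcol⟩, hdiag⟩ := hA
  obtain ⟨⟨t, -, -⟩, -⟩ := huniq 0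
  obtain ⟨ℓ, hℓ⟩ := hdiag t
  set e := finEquiv n
  have hsome : ∀ i j, (A t i j).isSome ↔ e j - e i = ℓ ∨ e j - e i = ℓ + 1 :=
    fun i j => by rw [hℓ, exists_lt_two_eq_add_iff, finEquiv_apply, finEquiv_apply]
  have hF : ∀ i j, (A t i j).getD 0 ≠ 0 → e j - e i = ℓ ∨ e j - e i = ℓ + 1 :=
    fun i j h => (hsome i j).1 <| Option.isSome_iff_ne_none.2 fun hnone => h (by rw [hnone]; rfl)
  set a : ZMod n → Γ := fun z => (A t (e.symm z) (e.symm (z + ℓ))).getD 0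
  have hcell : ∀ z, A t (e.symm z) (e.symm (z + ℓ)) = some (a z) := fun z => by
    obtain ⟨v, hv⟩ := Option.isSome_iff_exists.1
      ((hsome (e.symm z) (e.symm (z + ℓ))).2 (.inl (by simp)))
    simp only [a, hv]
    rfl
  have ha : Injective a := fun z z' h => by
    have hp := (huniq (a z)).unique (y₁ := (t, _, _)) (y₂ := (t, _, _)) (hcell z)
      (by rw [h]; exact hcell z')
    simpa using congrArg (fun p => p.2.1) hp
  refine ⟨δ - ω, addOrderOf_eq_of_injective_of_add_one ha fun z => ?_⟩
  have hr := (sum_row_eq_add_of_twoDiagonals hF z).symm.trans (hrow t _)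
  have hc := (sum_col_eq_add_of_twoDiagonals hF z).symm.trans (hcol t _)
  rw [← hr, ← hc]
  abel

section TwoDiagonalArray

variable {Γ : Type*} {n : ℕ} [NeZero n]

def twoDiagonalArray (a b : ZMod n → Γ) (i j : Fin n) : Option Γ :=
  if finEquiv n j - finEquiv n i = 0 then some (a (finEquiv n i))
  else if finEquiv n j - finEquiv n i = 1 then some (b (finEquiv n i)) else none

variable {a b : ZMod n → Γ}

theorem isSome_twoDiagonalArray {i j : Fin n} :
    (twoDiagonalArray a b i j).isSome ↔
      finEquiv n j - finEquiv n i = 0 ∨ finEquiv n j - finEquiv n i = 1 := by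
  unfold twoDiagonalArray
  split_ifs <;> simp_all

theorem exists_eq_of_isSome_twoDiagonalArray {i j : Fin n}
    (h : (twoDiagonalArray a b i j).isSome) :
    ∃ (ε : Bool) (z : ZMod n),
      i = (finEquiv n).symm z ∧ j = (finEquiv n).symm (z + if ε then 1 else 0) := by
  simp only [RingEquiv.eq_symm_apply]
  rcases isSome_twoDiagonalArray.1 h with h' | h'
  · exact ⟨false, _, rfl, by rw [if_neg Bool.false_ne_true]; linear_combination h'⟩
  · exact ⟨true, _, rfl, by rw [if_pos rfl]; linear_combination h'⟩

theorem twoDiagonalArray_support {M : Type*} [Zero M] {f : Option Γ → M} (hf : f none = 0)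
    (i j : Fin n) (h : f (twoDiagonalArray a b i j) ≠ 0) :
    finEquiv n j - finEquiv n i = 0 ∨ finEquiv n j - finEquiv n i = 0 + 1 := by
  rw [zero_add, ← isSome_twoDiagonalArray, Option.isSome_iff_ne_none]
  exact fun hnone => h (by rw [hnone, hf])

theorem twoDiagonalArray_symm_self (z : ZMod n) :
    twoDiagonalArray a b ((finEquiv n).symm z) ((finEquiv n).symm z) = some (a z) := by
  simp [twoDiagonalArray]

variable [Nontrivial (ZMod n)]

theorem twoDiagonalArray_symm_add_one (z : ZMod n) :
    twoDiagonalArray a b ((finEquiv n).symm z) ((finEquiv n).symm (z + 1)) = some (b z) := by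
  simp [twoDiagonalArray]

theorem twoDiagonalArray_symm_add_ite (ε : Bool) (z : ZMod n) :
    twoDiagonalArray a b ((finEquiv n).symm z) ((finEquiv n).symm (z + if ε then 1 else 0)) =
      some (if ε then b z else a z) := by
  cases ε
  · simpa only [Bool.false_eq_true, if_false, add_zero] using twoDiagonalArray_symm_self z
  · simpa only [if_true] using twoDiagonalArray_symm_add_one z

variable {M : Type*} [AddCommMonoid M] {f : Option Γ → M}

theorem sum_row_twoDiagonalArray (hf : f none = 0) (i : Fin n) :
    ∑ j, f (twoDiagonalArray a b i j) =
      f (some (a (finEquiv n i))) + f (some (b (finEquiv n i))) := by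
  obtain ⟨z, rfl⟩ := (finEquiv n).symm.surjective i
  simpa only [add_zero, RingEquiv.apply_symm_apply, twoDiagonalArray_symm_self,
    twoDiagonalArray_symm_add_one]
    using sum_row_eq_add_of_twoDiagonals (twoDiagonalArray_support hf) z

theorem sum_col_twoDiagonalArray (hf : f none = 0) (j : Fin n) :
    ∑ i, f (twoDiagonalArray a b i j) =
      f (some (b (finEquiv n j - 1))) + f (some (a (finEquiv n j))) := by
  obtain ⟨z, rfl⟩ : ∃ z, (finEquiv n).symm (z + 0 + 1) = j := ⟨finEquiv n j - 1, by simp⟩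
  simpa only [add_zero, RingEquiv.apply_symm_apply, add_sub_cancel_right,
    twoDiagonalArray_symm_self, twoDiagonalArray_symm_add_one]
    using sum_col_eq_add_of_twoDiagonals (twoDiagonalArray_support hf) z

end TwoDiagonalArray

theorem isDiagonalMRS_twoDiagonalArray {Γ : Type*} [AddCommGroup Γ] {n c : ℕ} [NeZero n]
    [Nontrivial (ZMod n)] {a b : Fin c → ZMod n → Γ}
    (hab : Bijective fun p : Fin c × Bool × ZMod n => if p.2.1 then b p.1 p.2.2 else a p.1 p.2.2)
    {ω δ : Γ} (hrow : ∀ t z, a t z + b t z = ω) (hcol : ∀ t z, b t z + a t (z + 1) = δ) :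
    IsDiagonalMRS n 2 c fun t => twoDiagonalArray (a t) (b t) := by
  refine ⟨⟨fun v => ?_, fun t i => ?_, fun t j => ?_, ω, δ, fun t i => ?_, fun t j => ?_⟩,
    fun t => ⟨0, fun i j => ?_⟩⟩
  · obtain ⟨⟨t, ε, z⟩, rfl⟩ := hab.surjective v
    refine ⟨(t, (finEquiv n).symm z, (finEquiv n).symm (z + if ε then 1 else 0)), ?_, ?_⟩
    · exact twoDiagonalArray_symm_add_ite ε z
    · rintro ⟨t', i, j⟩ h
      obtain ⟨ε', z', rfl, rfl⟩ :=
        exists_eq_of_isSome_twoDiagonalArray (Option.isSome_of_eq_some h)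
      have hv := (twoDiagonalArray_symm_add_ite (b := b t') ε' z').symm.trans h
      cases hab.injective (a₁ := (t', ε', z')) (Option.some_injective _ hv)
      rfl
  · exact (card_filter _ _).trans
      (sum_row_twoDiagonalArray (f := fun o => if o.isSome then 1 else 0) rfl i)
  · exact (card_filter _ _).trans
      (sum_col_twoDiagonalArray (f := fun o => if o.isSome then 1 else 0) rfl j)
  · exact (sum_row_twoDiagonalArray (f := fun o => o.getD 0) rfl i).trans (hrow t _)
  · refine (sum_col_twoDiagonalArray (f := fun o => o.getD 0) rfl j).trans ?_
    simpa using hcol t (finEquiv n j - 1)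
  · rw [exists_lt_two_eq_add_iff, ← finEquiv_apply, ← finEquiv_apply, isSome_twoDiagonalArray,
      zero_add]

theorem exists_forall_add_self_ne {Q : Type*} [AddGroup Q] [Finite Q] (h : 2 ∣ Nat.card Q) :
    ∃ s : Q, ∀ y, y + y ≠ s := by
  have := Fact.mk Nat.prime_two
  obtain ⟨q, hq⟩ := exists_prime_addOrderOf_dvd_card' 2 h
  have hq0 : q ≠ 0 := by rintro rfl; simp at hq
  have hdouble : ¬ Injective fun y : Q => y + y := fun hinj =>
    hq0 <| hinj <| show q + q = 0 + 0 by
      rw [← two_nsmul, ← hq, addOrderOf_nsmul_eq_zero, add_zero]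
  simpa [Surjective] using mt Finite.injective_iff_surjective.2 hdouble

theorem exists_bijective_prod_bool_of_involutive {α : Type*} [Finite α] {σ : α → α}
    (hσ : Involutive σ) (hfix : ∀ x, σ x ≠ x) {c : ℕ} (hcard : Nat.card α = 2 * c) :
    ∃ Y : Fin c × Bool → α, Bijective Y ∧ ∀ t, Y (t, true) = σ (Y (t, false)) := by
  classical
  have := Fintype.ofFinite α
  rw [Nat.card_eq_fintype_card] at hcard
  -- `R` takes from each pair `{x, σ x}` the element listed first by the enumeration `r`.
  let r := Fintype.equivFin α
  let R : Finset α := univ.filter fun x => r x < r (σ x)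
  have hR : ∀ x, σ x ∈ R ↔ x ∉ R := fun x => by
    have := r.injective.ne (hfix x)
    simp only [R, mem_filter, mem_univ, true_and, hσ x, not_lt]
    exact ⟨le_of_lt, fun h => lt_of_le_of_ne h this⟩
  have hRc : R.card = c := by
    have : R.card = Rᶜ.card :=
      card_nbij' σ σ (fun x hx => by simpa [hR] using hx)
        (fun x hx => by simpa [hR, hσ x] using hx) (fun x _ => hσ x) (fun x _ => hσ x)
    have := card_add_card_compl R
    omega
  let y : Fin c ≃ R := (finCongr hRc.symm).trans R.equivFin.symm
  refine ⟨fun p => if p.2 then σ (y p.1) else y p.1, ?_, fun t => rfl⟩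
  refine (Fintype.bijective_iff_injective_and_card _).2 ⟨?_, by simp [hcard, mul_comm]⟩
  rintro ⟨t, _ | _⟩ ⟨t', _ | _⟩ h <;> simp only [Bool.false_eq_true, if_false, if_true] at h
  · rw [y.injective (Subtype.ext h)]
  · exact absurd (y t').2 ((hR _).1 (by rw [← h]; exact (y t).2))
  · exact absurd (y t).2 ((hR _).1 (by rw [h]; exact (y t').2))
  · rw [y.injective (Subtype.ext (hσ.injective h))]

theorem exists_injective_zmodHom {G : Type*} [AddGroup G] {g : G} {n : ℕ}
    (hg : addOrderOf g = n) :
    ∃ φ : ZMod n →+ G, Injective φ ∧ φ 1 = g := by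
  subst hg
  refine ⟨lift _ ⟨zmultiplesHom G g, by simp⟩, (lift_injective _).2 fun m hm => ?_, ?_⟩
  · simpa [ZMod.intCast_zmod_eq_zero_iff_dvd, addOrderOf_dvd_iff_zsmul_eq_zero] using hm
  · simpa using lift_coe _ ⟨zmultiplesHom G g, by simp⟩ 1

theorem exists_isDiagonalMRS_of_addOrderOf_eq {Γ : Type*} [AddCommGroup Γ] [Fintype Γ]
    {n c : ℕ} (hn : 2 ≤ n) (hcard : Fintype.card Γ = 2 * n * c) {g : Γ}
    (hg : addOrderOf g = n) :
    ∃ A : Fin c → Fin n → Fin n → Option Γ, IsDiagonalMRS n 2 c A := by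
  have : NeZero n := ⟨by omega⟩
  have : Fact (1 < n) := ⟨hn⟩
  obtain ⟨φ, hφ, hφ1⟩ := exists_injective_zmodHom hg
  have hQ : Nat.card (Γ ⧸ φ.range) = 2 * c := by
    have h := φ.range.card_eq_card_quotient_mul_card_addSubgroup
    rw [← Nat.card_congr (AddMonoidHom.ofInjective hφ).toEquiv, Nat.card_zmod,
      Nat.card_eq_fintype_card, hcard] at h
    exact Nat.eq_of_mul_eq_mul_right (m := n) (by omega) (by linarith)
  obtain ⟨s, hs⟩ := exists_forall_add_self_ne (hQ ▸ dvd_mul_right 2 c)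
  obtain ⟨Y, hY, hYσ⟩ := exists_bijective_prod_bool_of_involutive (σ := fun y => s - y)
    (sub_sub_cancel s) (fun y h => hs y (sub_eq_iff_eq_add.1 h).symm) hQ
  let x t := (Y (t, false)).out
  let ω := s.out
  refine ⟨_, isDiagonalMRS_twoDiagonalArray (a := fun t z => x t + φ z)
    (b := fun t z => ω - x t - φ z) ?_ (ω := ω) (δ := ω + g) (fun t z => by abel)
    (fun t z => by rw [map_add, hφ1]; abel)⟩
  have hmk : ∀ p : Fin c × Bool × ZMod n,
      ((if p.2.1 then ω - x p.1 - φ p.2.2 else x p.1 + φ p.2.2 : Γ) : Γ ⧸ φ.range) =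
        Y (p.1, p.2.1) := by
    rintro ⟨t, _ | _, z⟩ <;> simp [x, ω, hYσ, QuotientAddGroup.eq_zero_iff]
  refine (Fintype.bijective_iff_injective_and_card _).2 ⟨?_, by
    simp only [Fintype.card_prod, Fintype.card_fin, Fintype.card_bool, ZMod.card, hcard]; ring⟩
  rintro ⟨t, ε, z⟩ ⟨t', ε', z'⟩ h
  cases hY.injective ((hmk (t, ε, z)).symm.trans (congrArg _ h |>.trans (hmk _)))
  cases ε
  · simpa using hφ (add_left_cancel h)
  · simpa using hφ (sub_right_injective h)

theorem stmt11_general (n c : ℕ) (hn : 2 ≤ n)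
    (Γ : Type*) [AddCommGroup Γ] [Fintype Γ] (hcard : Fintype.card Γ = 2 * n * c) :
    (∃ A : Fin c → Fin n → Fin n → Option Γ, IsDiagonalMRS n 2 c A) ↔
      ∃ g : Γ, addOrderOf g = n :=
  ⟨fun ⟨_, hA⟩ => exists_addOrderOf_eq_of_isDiagonalMRS hn hA,
    fun ⟨_, hg⟩ => exists_isDiagonalMRS_of_addOrderOf_eq hn hcard hg⟩

/-- Let `n ≥ 2`, `c ≥ 1`. A diagonal `MRS_Γ(n;2;c)` exists if and only if the abelian group
`Γ` of order `2·n·c` contains an element of order `n`. -/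
theorem stmt11 (n c : ℕ) (hn : 2 ≤ n) (hc : 1 ≤ c)
    (Γ : Type*) [AddCommGroup Γ] [Fintype Γ] (hcard : Fintype.card Γ = 2 * n * c) :
    (∃ A : Fin c → Fin n → Fin n → Option Γ, IsDiagonalMRS n 2 c A) ↔
      ∃ g : Γ, addOrderOf g = n :=
  stmt11_general n c hn Γ hcard
end

section
/- Let b, n, c be positive integers such that 4 ≤ 4b ≤ n. Then for every finite abelian group Γ of order 4·n·b·c there exists a diagonal Γ-magic rectangle set MRS_Γ(n;4b;c). -/
open Finset

/-!
A finite abelian group `Γ` of even order has an element `ι` that is not a double, and a subgroup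
`H` maximal among those containing all doubles but not `ι` has index two, with
`Γ = H ⊔ (ι - H)`. Repeating this inside `H` (of even order `|Γ| / 2`) gives `ι' ∈ H` such that
`z ↦ ι' - z` is a fixed-point-free involution of `H`, so `H = T ⊔ (ι' - T)` and
`Γ = T ⊔ (ι' - T) ⊔ (ι - T) ⊔ (ι - ι' + T)` with `|T| = nbc`.

Label `T` by `(t, w, i) ∈ Fin c × Fin b × ZMod n` as `y_{t,w}(i)`. In array `t`, row `i`, the four
diagonals `4w, …, 4w + 3` carry `y(i)`, `ι - y(i + 1)`, `ι' - y(i)`, `ι - ι' + y(i + 1)` with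
`y = y_{t,w}`. Along each row and each column the `y`-values of a block cancel in pairs, so all
line sums equal `b • (ι + ι)`.
-/

section Involution
variable {X : Type*} [Fintype X] {σ : X → X}

theorem Function.Involutive.card_eq_two_mul [DecidableEq X] (hσ : σ.Involutive) {S : Finset X}
    (hS : ∀ x, x ∈ S ↔ σ x ∉ S) : Fintype.card X = 2 * #S := by
  have hcompl : Sᶜ = S.map (hσ.toPerm σ).toEmbedding := by
    ext x
    rw [mem_compl, mem_map_equiv, Function.Involutive.toPerm_symm, hS (hσ.toPerm σ x)]
    simp [hσ x]
  rw [← card_add_card_compl S, hcompl, card_map, two_mul]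

theorem Function.Involutive.exists_finset_mem_iff_notMem (hσ : σ.Involutive)
    (hfix : ∀ x, σ x ≠ x) : ∃ S : Finset X, ∀ x, x ∈ S ↔ σ x ∉ S := by
  classical
  let f := Fintype.equivFin X
  refine ⟨univ.filter fun x => f x < f (σ x), fun x => ?_⟩
  have hne : f x ≠ f (σ x) := f.injective.ne (hfix x).symm
  simp only [mem_filter, mem_univ, true_and, hσ x, not_lt]
  exact ⟨le_of_lt, fun h => lt_of_le_of_ne h hne⟩

theorem Function.Involutive.exists_cover (hσ : σ.Involutive) (hfix : ∀ x, σ x ≠ x)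
    (Q : Type*) [Fintype Q] (hQ : Fintype.card X = 2 * Fintype.card Q) :
    ∃ y : Q → X, ∀ x, ∃ q, y q = x ∨ y q = σ x := by
  classical
  obtain ⟨T, hT⟩ := hσ.exists_finset_mem_iff_notMem hfix
  have hcardT : Fintype.card Q = Fintype.card T := by
    have := hσ.card_eq_two_mul hT
    simp only [Fintype.card_coe]
    omega
  let e := Fintype.equivOfCardEq hcardT
  refine ⟨fun q => e q, fun x => ?_⟩
  by_cases hx : x ∈ T
  · exact ⟨e.symm ⟨x, hx⟩, Or.inl (by simp)⟩
  · exact ⟨e.symm ⟨σ x, of_not_not fun h => hx ((hT x).2 h)⟩, Or.inr (by simp)⟩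

end Involution

section Group
variable {G : Type*} [AddCommGroup G]

theorem exists_forall_add_self_ne_s13 [Fintype G] (h : 2 ∣ Fintype.card G) :
    ∃ ι : G, ∀ x : G, x + x ≠ ι := by
  obtain ⟨g, hg⟩ := exists_prime_addOrderOf_dvd_card 2 h
  have hg0 : g ≠ 0 := by rintro rfl; simp at hg
  have hnot_inj : ¬ Function.Injective fun x : G => x + x := fun hinj =>
    hg0 (hinj (by simp [← two_nsmul, ← hg]))
  rw [Finite.injective_iff_surjective] at hnot_inj
  simpa [Function.Surjective] using hnot_inj

theorem exists_addSubgroup_mem_or_sub_mem [Finite G] {ι : G} (hι : ∀ x : G, x + x ≠ ι) :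
    ∃ H : AddSubgroup G, ι ∉ H ∧ ∀ g, g ∈ H ∨ ι - g ∈ H := by
  let D := (zsmulAddGroupHom (α := G) 2).range
  have hD : ∀ x : G, x + x ∈ D := fun x => ⟨x, two_zsmul x⟩
  have hιD : ι ∉ D := by
    rintro ⟨x, hx⟩
    exact hι x (by simpa [two_zsmul] using hx)
  obtain ⟨H, ⟨hDH, hιH⟩, hmax⟩ := Set.Finite.exists_maximalFor id
    {K : AddSubgroup G | D ≤ K ∧ ι ∉ K} (Set.toFinite _) ⟨D, le_rfl, hιD⟩
  refine ⟨H, hιH, fun g => or_iff_not_imp_left.2 fun hg => ?_⟩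
  have hι_sup : ι ∈ H ⊔ AddSubgroup.zmultiples g := by
    by_contra h
    exact hg (hmax ⟨hDH.trans le_sup_left, h⟩ le_sup_left
      (le_sup_right (α := AddSubgroup G) (AddSubgroup.mem_zmultiples g)))
  obtain ⟨v, hv, _, ⟨m, rfl⟩, hvm⟩ := AddSubgroup.mem_sup.1 hι_sup
  dsimp only at hvm
  have hdouble : ∀ k : ℤ, k • (g + g) ∈ H := fun k => H.zsmul_mem (hDH (hD g)) k
  -- `ι = v + m • g`: an even `m` would put `ι` in `H`, an odd one puts `ι - g` in `H`.
  obtain ⟨k, rfl | rfl⟩ := Int.even_or_odd' m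
  · refine absurd ?_ hιH
    rw [← hvm, two_mul, add_zsmul, ← zsmul_add]
    exact H.add_mem hv (hdouble k)
  · have hιg : ι - g = v + k • (g + g) := by
      rw [← hvm, add_zsmul, one_zsmul, two_mul, add_zsmul, zsmul_add]; abel
    rw [hιg]
    exact H.add_mem hv (hdouble k)

theorem exists_quarter_cover [Fintype G] (Q : Type*) [Fintype Q]
    (hQ : Fintype.card G = 4 * Fintype.card Q) :
    ∃ (ι ι' : G) (y : Q → G), ∀ g, ∃ q,
      y q = g ∨ y q = ι' - g ∨ y q = ι - g ∨ y q = ι' - (ι - g) := by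
  classical
  obtain ⟨ι, hι⟩ := exists_forall_add_self_ne_s13 (G := G) ⟨2 * Fintype.card Q, by rw [hQ]; ring⟩
  obtain ⟨H, hιH, hcover⟩ := exists_addSubgroup_mem_or_sub_mem hι
  have hcardH : Fintype.card G = 2 * Fintype.card H := by
    rw [Fintype.card_subtype]
    refine Function.Involutive.card_eq_two_mul (σ := (ι - ·)) (sub_sub_cancel ι) fun x => ?_
    simp only [mem_filter, mem_univ, true_and]
    refine ⟨fun hx hιx => hιH (by simpa using H.add_mem hx hιx), fun hx => ?_⟩
    exact (hcover x).resolve_right hx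
  obtain ⟨ι', hι'⟩ := exists_forall_add_self_ne_s13 (G := H) (Dvd.intro (Fintype.card Q) (by omega))
  have hσ : Function.Involutive (ι' - · : H → H) := sub_sub_cancel ι'
  have hfix : ∀ z : H, ι' - z ≠ z := fun z h => hι' z (by rw [← sub_eq_iff_eq_add.1 h])
  obtain ⟨y, hy⟩ := hσ.exists_cover hfix Q (by omega)
  refine ⟨ι, ι', fun q => y q, fun g => ?_⟩
  rcases hcover g with hg | hg
  · obtain ⟨q, hq | hq⟩ := hy ⟨g, hg⟩ <;> exact ⟨q, by simp [hq]⟩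
  · obtain ⟨q, hq | hq⟩ := hy ⟨ι - g, hg⟩ <;> exact ⟨q, by simp [hq]⟩

end Group

section DiagonalArray
variable {n k : ℕ}

def diagArray {α : Type*} (k : ℕ) (f : ZMod n → Fin k → α) (i j : Fin n) : Option α :=
  if h : (((j : ℕ) : ZMod n) - ((i : ℕ) : ZMod n)).val < k then
    some (f (i : ℕ) ⟨_, h⟩)
  else none

theorem diagArray_isSome {α : Type*} (f : ZMod n → Fin k → α) (i j : Fin n) :
    (diagArray k f i j).isSome ↔ (((j : ℕ) : ZMod n) - ((i : ℕ) : ZMod n)).val < k := by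
  unfold diagArray; split <;> simp_all

theorem diagArray_getD {M : Type*} [AddCommMonoid M] (f : ZMod n → Fin k → M) (i j : Fin n) :
    (diagArray k f i j).getD 0 =
      if h : (((j : ℕ) : ZMod n) - ((i : ℕ) : ZMod n)).val < k then f (i : ℕ) ⟨_, h⟩
      else 0 := by
  unfold diagArray; split <;> rfl

theorem Fin.val_natCast_zmod_of_le (hk : k ≤ n) (u : Fin k) : ((u : ℕ) : ZMod n).val = u :=
  ZMod.val_natCast_of_lt (u.isLt.trans_le hk)

def finEquivZMod (n : ℕ) [NeZero n] : Fin n ≃ ZMod n where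
  toFun j := (j : ℕ)
  invFun z := ⟨z.val, z.val_lt⟩
  left_inv j := Fin.ext (ZMod.val_natCast_of_lt j.isLt)
  right_inv := ZMod.natCast_zmod_val

variable [NeZero n]

theorem sum_fin_natCast_zmod {M : Type*} [AddCommMonoid M] (F : ZMod n → M) :
    ∑ j : Fin n, F (j : ℕ) = ∑ z, F z :=
  (finEquivZMod n).sum_comp F

theorem sum_zmod_dite_val_lt {M : Type*} [AddCommMonoid M] (hk : k ≤ n)
    (F : ZMod n → Fin k → M) :
    ∑ d : ZMod n, (if h : d.val < k then F d ⟨d.val, h⟩ else 0) = ∑ u : Fin k, F (u : ℕ) u := by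
  refine (Fintype.sum_of_injective (fun u : Fin k => ((u : ℕ) : ZMod n)) ?_ _ _ ?_ ?_).symm
  · exact fun u v h => Fin.ext (by simpa [Fin.val_natCast_zmod_of_le hk] using congrArg ZMod.val h)
  · intro d hd
    rw [dif_neg]
    exact fun h => hd ⟨⟨d.val, h⟩, ZMod.natCast_zmod_val d⟩
  · intro u
    simp [Fin.val_natCast_zmod_of_le hk]

theorem diagArray_eq_some_iff {α : Type*} (f : ZMod n → Fin k → α) (hk : k ≤ n) (i j : Fin n)
    (g : α) : diagArray k f i j = some g ↔
      ∃ u : Fin k, ((j : ℕ) : ZMod n) = (i : ℕ) + (u : ℕ) ∧ f (i : ℕ) u = g := by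
  unfold diagArray
  split_ifs with h
  · rw [Option.some_inj]
    constructor
    · rintro rfl
      exact ⟨⟨_, h⟩, by simp, rfl⟩
    · rintro ⟨u, hj, rfl⟩
      congr
      simp [hj, Fin.val_natCast_zmod_of_le hk]
  · simp only [false_iff, not_exists, not_and]
    intro u hj
    exact absurd (by simp [hj, Fin.val_natCast_zmod_of_le hk]) h

theorem existsUnique_diagArray_eq_some {α : Type*} {c : ℕ} (hk : k ≤ n)
    (f : Fin c → ZMod n → Fin k → α)
    (hf : Function.Bijective fun p : Fin c × ZMod n × Fin k => f p.1 p.2.1 p.2.2) (g : α) :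
    ∃! p : Fin c × Fin n × Fin n, diagArray k (f p.1) p.2.1 p.2.2 = some g := by
  let e := finEquivZMod n
  have he : ∀ z, (((e.symm z : Fin n) : ℕ) : ZMod n) = z := e.apply_symm_apply
  obtain ⟨⟨t, z, u⟩, rfl⟩ := hf.2 g
  refine ⟨(t, e.symm z, e.symm (z + (u : ℕ))), ?_, ?_⟩
  · exact (diagArray_eq_some_iff _ hk _ _ _).2 ⟨u, by simp [he], by simp [he]⟩
  · rintro ⟨t', i, j⟩ h
    obtain ⟨u', hj, hfu⟩ := (diagArray_eq_some_iff _ hk _ _ _).1 h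
    have hq := hf.1 (a₁ := (t', _, u')) (a₂ := (t, z, u)) hfu
    simp only [Prod.mk.injEq] at hq
    obtain ⟨rfl, rfl, rfl⟩ := hq
    exact Prod.ext rfl (Prod.ext (e.symm_apply_apply i).symm (e.symm_apply_eq.2 hj.symm).symm)

section Sums
variable {M : Type*} [AddCommMonoid M] (f : ZMod n → Fin k → M)

theorem sum_diagArray_row (hk : k ≤ n) (i : Fin n) :
    ∑ j, (diagArray k f i j).getD 0 = ∑ u, f (i : ℕ) u := by
  simp only [diagArray_getD]
  refine (sum_fin_natCast_zmod
    (fun z => if h : (z - ((i : ℕ) : ZMod n)).val < k then f (i : ℕ) ⟨_, h⟩ else 0)).trans ?_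
  refine ((Equiv.subRight ((i : ℕ) : ZMod n)).sum_comp
    (fun d => if h : d.val < k then f (i : ℕ) ⟨_, h⟩ else 0)).trans ?_
  exact sum_zmod_dite_val_lt hk (fun _ u => f (i : ℕ) u)

theorem sum_diagArray_col (hk : k ≤ n) (j : Fin n) :
    ∑ i, (diagArray k f i j).getD 0 = ∑ u : Fin k, f ((j : ℕ) - (u : ℕ)) u := by
  simp only [diagArray_getD]
  refine (sum_fin_natCast_zmod
    (fun z => if h : (((j : ℕ) : ZMod n) - z).val < k then f z ⟨_, h⟩ else 0)).trans ?_
  rw [← (Equiv.subLeft ((j : ℕ) : ZMod n)).sum_comp]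
  simp only [Equiv.subLeft_apply, sub_sub_cancel]
  exact sum_zmod_dite_val_lt hk (fun d u => f ((j : ℕ) - d) u)

end Sums

theorem card_filter_diagArray_isSome_row {α : Type*} (f : ZMod n → Fin k → α) (hk : k ≤ n)
    (i : Fin n) : #{j | (diagArray k f i j).isSome} = k :=
  calc #{j | (diagArray k f i j).isSome}
      = ∑ j, (diagArray k (fun _ _ => (1 : ℕ)) i j).getD 0 := by
        rw [card_filter]
        refine sum_congr rfl fun j _ => ?_
        simp only [diagArray_getD, diagArray_isSome, dite_eq_ite]
    _ = k := by simp [sum_diagArray_row _ hk]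

theorem card_filter_diagArray_isSome_col {α : Type*} (f : ZMod n → Fin k → α) (hk : k ≤ n)
    (j : Fin n) : #{i | (diagArray k f i j).isSome} = k :=
  calc #{i | (diagArray k f i j).isSome}
      = ∑ i, (diagArray k (fun _ _ => (1 : ℕ)) i j).getD 0 := by
        rw [card_filter]
        refine sum_congr rfl fun i _ => ?_
        simp only [diagArray_getD, diagArray_isSome, dite_eq_ite]
    _ = k := by simp [sum_diagArray_col _ hk]

theorem isDiagonalMRS_diagArray {Γ : Type*} [AddCommGroup Γ] {c : ℕ} (hk : k ≤ n)
    (f : Fin c → ZMod n → Fin k → Γ)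
    (hf : Function.Bijective fun p : Fin c × ZMod n × Fin k => f p.1 p.2.1 p.2.2) {ω δ : Γ}
    (hrow : ∀ t i, ∑ u, f t i u = ω) (hcol : ∀ t j, ∑ u : Fin k, f t (j - (u : ℕ)) u = δ) :
    IsDiagonalMRS n k c fun t => diagArray k (f t) := by
  refine ⟨⟨existsUnique_diagArray_eq_some hk f hf,
    fun t i => card_filter_diagArray_isSome_row _ hk i,
    fun t j => card_filter_diagArray_isSome_col _ hk j, ω, δ,
    fun t i => (sum_diagArray_row _ hk i).trans (hrow t _),
    fun t j => (sum_diagArray_col _ hk j).trans (hcol t _)⟩, fun t => ⟨0, fun i j => ?_⟩⟩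
  rw [diagArray_isSome]
  constructor
  · exact fun h => ⟨_, h, by simp⟩
  · rintro ⟨u, hu, hd⟩
    rwa [hd, zero_add, ZMod.val_natCast_of_lt (hu.trans_le hk)]

end DiagonalArray

section Block
variable {Γ : Type*} [AddCommGroup Γ] {n b : ℕ} (ι ι' : Γ)

def blockEntry (y : Fin b → ZMod n → Γ) (i : ZMod n) (u : Fin (b * 4)) : Γ :=
  ![y u.divNat i, ι - y u.divNat (i + 1), ι' - y u.divNat i, ι - ι' + y u.divNat (i + 1)]
    u.modNat

theorem blockEntry_finProdFinEquiv (y : Fin b → ZMod n → Γ) (i : ZMod n) (w : Fin b)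
    (r : Fin 4) : blockEntry ι ι' y i (finProdFinEquiv (w, r)) =
      ![y w i, ι - y w (i + 1), ι' - y w i, ι - ι' + y w (i + 1)] r := by
  have h := finProdFinEquiv.symm_apply_apply (w, r)
  rw [finProdFinEquiv_symm_apply, Prod.mk.injEq] at h
  rw [blockEntry, h.1, h.2]

theorem sum_blockEntry_row (y : Fin b → ZMod n → Γ) (i : ZMod n) :
    ∑ u, blockEntry ι ι' y i u = b • (ι + ι) := by
  have hblock : ∀ w, ∑ r : Fin 4, blockEntry ι ι' y i (finProdFinEquiv (w, r)) = ι + ι := by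
    intro w
    simp only [blockEntry_finProdFinEquiv, Fin.sum_univ_four, Matrix.cons_val]
    abel
  rw [← finProdFinEquiv.sum_comp, Fintype.sum_prod_type, Fintype.sum_congr _ _ hblock]
  simp

theorem sum_blockEntry_col (y : Fin b → ZMod n → Γ) (j : ZMod n) :
    ∑ u : Fin (b * 4), blockEntry ι ι' y (j - (u : ℕ)) u = b • (ι + ι) := by
  have hblock : ∀ w, ∑ r : Fin 4, blockEntry ι ι' y (j - (finProdFinEquiv (w, r) : ℕ))
      (finProdFinEquiv (w, r)) = ι + ι := by
    intro w
    simp only [blockEntry_finProdFinEquiv, Fin.sum_univ_four, Matrix.cons_val,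
      finProdFinEquiv_apply_val, Fin.coe_ofNat_eq_mod, Nat.reduceMod]
    push_cast
    rw [show j - (1 + 4 * ((w : ℕ) : ZMod n)) + 1 = j - (0 + 4 * ((w : ℕ) : ZMod n)) by ring,
      show j - (3 + 4 * ((w : ℕ) : ZMod n)) + 1 = j - (2 + 4 * ((w : ℕ) : ZMod n)) by ring]
    abel
  rw [← finProdFinEquiv.sum_comp, Fintype.sum_prod_type, Fintype.sum_congr _ _ hblock]
  simp

theorem blockEntry_surjective {c : ℕ} (y : Fin c × Fin b × ZMod n → Γ)
    (hy : ∀ g, ∃ q, y q = g ∨ y q = ι' - g ∨ y q = ι - g ∨ y q = ι' - (ι - g)) :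
    Function.Surjective fun p : Fin c × ZMod n × Fin (b * 4) =>
      blockEntry ι ι' (fun w i => y (p.1, w, i)) p.2.1 p.2.2 := by
  intro g
  obtain ⟨⟨t, w, i⟩, h | h | h | h⟩ := hy g
  · exact ⟨(t, i, finProdFinEquiv (w, 0)), by simp [blockEntry_finProdFinEquiv, h]⟩
  · exact ⟨(t, i, finProdFinEquiv (w, 2)), by simp [blockEntry_finProdFinEquiv, h]⟩
  · exact ⟨(t, i - 1, finProdFinEquiv (w, 1)), by simp [blockEntry_finProdFinEquiv, h]⟩
  · exact ⟨(t, i - 1, finProdFinEquiv (w, 3)), by simp [blockEntry_finProdFinEquiv, h]⟩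

end Block

theorem stmt13_general (b n c : ℕ) (hn : 4 * b ≤ n)
    (Γ : Type*) [AddCommGroup Γ] [Fintype Γ] (hcard : Fintype.card Γ = 4 * n * b * c) :
    ∃ A : Fin c → Fin n → Fin n → Option Γ, IsDiagonalMRS n (4 * b) c A := by
  have : NeZero n := ⟨by rintro rfl; simp at hcard⟩
  obtain ⟨ι, ι', y, hy⟩ := exists_quarter_cover (G := Γ) (Fin c × Fin b × ZMod n)
    (by simp [hcard]; ring)
  rw [mul_comm 4 b]
  refine ⟨_, isDiagonalMRS_diagArray (by omega) (fun t => blockEntry ι ι' fun w i => y (t, w, i))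
    ?_ (fun t i => sum_blockEntry_row ι ι' _ i) (fun t j => sum_blockEntry_col ι ι' _ j)⟩
  exact (Fintype.bijective_iff_surjective_and_card _).2
    ⟨blockEntry_surjective ι ι' y hy, by simp [hcard]; ring⟩

/-- Let `4 ≤ 4b ≤ n`. For every abelian group `Γ` of order `4·n·b·c` there exists a diagonal
`MRS_Γ(n;4b;c)`. -/
theorem stmt13 (b n c : ℕ) (hb : 0 < b) (hn : 4 * b ≤ n) (hbn : 4 ≤ 4 * b) (hc : 0 < c)
    (Γ : Type*) [AddCommGroup Γ] [Fintype Γ] (hcard : Fintype.card Γ = 4 * n * b * c) :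
    ∃ A : Fin c → Fin n → Fin n → Option Γ, IsDiagonalMRS n (4 * b) c A :=
  stmt13_general b n c hn Γ hcard
end

section
/- Let m, n, s, k be even integers such that 2 ≤ s ≤ n, 2 ≤ k ≤ m and m·s = n·k, and let c ≥ 1. Then for every finite abelian group Γ of order n·k·c there exists a Γ-magic rectangle set MRS_Γ(m,n;s,k;c). -/
open Finset

/-!
Write `m, n, s, k` as twice `m', n', s', k'`. If `α, β ∈ Γ` are not doubles, `α ≠ β` and
`2α = 2β`, the involutions `x ↦ α - x` and `x ↦ β - x` generate a free action of the Klein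
four-group on `Γ`, and every orbit, arranged as
`[[x, α - x], [β - x, x + β - α]]`, is a `2 × 2` array with row sums `α` and column sums `β`.
Such `α, β` exist because `4 ∣ |Γ|`. Placing these `|Γ| / 4 = c m' s'` blocks on the cells of `c`
copies of an `m' × n'` pattern with `s'` cells in each row and `k'` in each column (row `i` occupies
the columns `i s', …, i s' + s' - 1` modulo `n'`) gives the magic rectangle set.
-/

open Function

theorem bijective_vadd_out_of_free {G X : Type*} [AddGroup G] [AddAction G X]
    (hfree : ∀ (g : G) (x : X), g +ᵥ x = x → g = 0) :
    Bijective fun p : Quotient (AddAction.orbitRel G X) × G => p.2 +ᵥ p.1.out := by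
  have orbit_vadd_out (ω : Quotient (AddAction.orbitRel G X)) (g : G) :
      (⟦g +ᵥ ω.out⟧ : Quotient (AddAction.orbitRel G X)) = ω := by
    rw [← ω.out_eq, Quotient.eq, AddAction.orbitRel_apply]
    simp
  refine ⟨?_, fun x => ?_⟩
  · rintro ⟨ω, g⟩ ⟨ω', g'⟩ h
    simp only at h
    obtain rfl : ω = ω' := by
      rw [← orbit_vadd_out ω g, ← orbit_vadd_out ω' g', h]
    have : (-g' + g) +ᵥ ω.out = ω.out := by
      rw [add_vadd, h, neg_vadd_vadd]
    simp [neg_add_eq_zero.1 (hfree _ _ this)]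
  · obtain ⟨g, hg⟩ := AddAction.orbitRel_apply.1
      ((AddAction.orbitRel G X).symm' (Quotient.mk_out x))
    exact ⟨(Quotient.mk _ x, g), hg⟩

section KleinFour

variable {Γ : Type*} [AddCommGroup Γ] {α β : Γ}

def kleinVAdd (α β : Γ) (g : Fin 2 × Fin 2) (x : Γ) : Γ :=
  let y := if g.2 = 0 then x else α - x
  if g.1 = 0 then y else β - y

theorem kleinVAdd_zero (x : Γ) : kleinVAdd α β 0 x = x := by
  simp [kleinVAdd]

theorem kleinVAdd_add (h : 2 • α = 2 • β) (g g' : Fin 2 × Fin 2) (x : Γ) :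
    kleinVAdd α β (g + g') x = kleinVAdd α β g (kleinVAdd α β g' x) := by
  obtain ⟨r, u⟩ := g
  obtain ⟨r', u'⟩ := g'
  fin_cases r <;> fin_cases u <;> fin_cases r' <;> fin_cases u' <;>
    simp only [kleinVAdd, Fin.isValue, Fin.zero_eta, Fin.mk_one, Prod.mk_add_mk, Fin.reduceAdd,
      add_zero, zero_add, one_ne_zero, ↓reduceIte] <;>
    first
      | module
      | linear_combination (norm := module) h
      | linear_combination (norm := module) h.symm

@[reducible] def kleinAction (h : 2 • α = 2 • β) : AddAction (Fin 2 × Fin 2) Γ where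
  vadd := kleinVAdd α β
  zero_vadd := kleinVAdd_zero
  add_vadd := kleinVAdd_add h

theorem eq_zero_of_kleinVAdd_eq_self (hα : ∀ x : Γ, 2 • x ≠ α) (hβ : ∀ x : Γ, 2 • x ≠ β)
    (hαβ : α ≠ β) {g : Fin 2 × Fin 2} {x : Γ} (h : kleinVAdd α β g x = x) : g = 0 := by
  obtain ⟨r, u⟩ := g
  fin_cases r <;> fin_cases u <;>
    simp only [kleinVAdd, Fin.isValue, Fin.zero_eta, Fin.mk_one, one_ne_zero, ↓reduceIte,
      Prod.mk_eq_zero, and_self, and_true, true_and] at h ⊢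
  · exact hα x (by linear_combination (norm := module) -h)
  · exact hβ x (by linear_combination (norm := module) -h)
  · exact hαβ (by linear_combination (norm := module) -h)

theorem kleinVAdd_add_kleinVAdd_row (h : 2 • α = 2 • β) (r : Fin 2) (x : Γ) :
    kleinVAdd α β (r, 0) x + kleinVAdd α β (r, 1) x = α := by
  fin_cases r <;> simp only [kleinVAdd, Fin.isValue, Fin.zero_eta, Fin.mk_one, one_ne_zero,
    ↓reduceIte, add_sub_cancel]
  linear_combination (norm := module) h.symm

theorem kleinVAdd_add_kleinVAdd_col (u : Fin 2) (x : Γ) :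
    kleinVAdd α β (0, u) x + kleinVAdd α β (1, u) x = β := by
  fin_cases u <;> simp [kleinVAdd]

theorem exists_equiv_blocks_rowSum_colSum [Finite Γ] (hα : ∀ x : Γ, 2 • x ≠ α)
    (hβ : ∀ x : Γ, 2 • x ≠ β) (hαβ : α ≠ β) (h : 2 • α = 2 • β) (ι : Type*) [Finite ι]
    (hcard : Nat.card Γ = Nat.card ι * 4) :
    ∃ w : ι × Fin 2 × Fin 2 ≃ Γ,
      (∀ p r, w (p, r, 0) + w (p, r, 1) = α) ∧ ∀ p u, w (p, 0, u) + w (p, 1, u) = β := by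
  let := kleinAction h
  let W := Equiv.ofBijective _ <| bijective_vadd_out_of_free (G := Fin 2 × Fin 2) (X := Γ)
    fun _ _ => eq_zero_of_kleinVAdd_eq_self hα hβ hαβ
  have hcardι : Nat.card ι = Nat.card (Quotient (AddAction.orbitRel (Fin 2 × Fin 2) Γ)) := by
    have := Nat.card_congr W
    rw [Nat.card_prod, Nat.card_prod, Nat.card_fin] at this
    omega
  obtain ⟨e⟩ := Finite.card_eq.1 hcardι
  exact ⟨(e.prodCongr (Equiv.refl _)).trans W, fun _ r => kleinVAdd_add_kleinVAdd_row h r _,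
    fun _ u => kleinVAdd_add_kleinVAdd_col u _⟩

end KleinFour

theorem exists_pair_not_double {Γ : Type*} [AddCommGroup Γ] [Finite Γ] (h4 : 4 ∣ Nat.card Γ) :
    ∃ α β : Γ, (∀ x : Γ, 2 • x ≠ α) ∧ (∀ x : Γ, 2 • x ≠ β) ∧ α ≠ β ∧ 2 • α = 2 • β := by
  classical
  let φ : Γ →+ Γ := nsmulAddMonoidHom 2
  by_cases horder4 : ∃ e : Γ, 4 • e = 0 ∧ 2 • e ≠ 0
  · obtain ⟨e, he4, he2⟩ := horder4
    have hφ : ¬ Surjective φ := fun hsurj => he2 <|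
      Finite.injective_iff_surjective.2 hsurj (a₂ := 0) (by simp [φ, smul_smul, he4])
    obtain ⟨α, hα⟩ := not_forall.1 hφ
    refine ⟨α, α + 2 • e, fun x hx => hα ⟨x, hx⟩, fun x hx => hα ⟨x - e, ?_⟩, ?_, ?_⟩
    · simp [φ, smul_sub, hx]
    · simpa using he2
    · rw [smul_add, smul_smul, show 2 * 2 = 4 from rfl, he4, add_zero]
  simp only [not_exists, not_and, not_not] at horder4
  -- Otherwise `2Γ` has no element of order `2`, so `|2Γ|` is odd and `4` divides `|Γ[2]|`.
  have hrange : Nat.Coprime 2 (Nat.card φ.range) := by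
    refine Nat.prime_two.coprime_iff_not_dvd.2 fun h2 => ?_
    have : Fact (Nat.Prime 2) := ⟨Nat.prime_two⟩
    obtain ⟨⟨_, e, rfl⟩, he⟩ := exists_prime_addOrderOf_dvd_card' 2 h2
    have h2e : 2 • e = 0 := horder4 e <| by
      simpa [φ, smul_smul, ← Subtype.val_inj] using (he ▸ addOrderOf_nsmul_eq_zero _ :)
    simp [φ, h2e] at he
  have hker : 4 ≤ Nat.card φ.ker := by
    rw [← φ.ker.card_mul_index, AddSubgroup.index_ker] at h4
    exact Nat.le_of_dvd Nat.card_pos ((hrange.pow_left 2).dvd_of_dvd_mul_right h4)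
  have := Fintype.ofFinite φ.ker
  obtain ⟨α, hα, β, hβ, hαβ⟩ := (one_lt_card (s := (univ : Finset φ.ker).erase 0)).1 <| by
    rw [card_erase_of_mem (mem_univ _), card_univ, ← Nat.card_eq_fintype_card]
    omega
  have not_double (γ : φ.ker) (hγ : γ ∈ (univ : Finset φ.ker).erase 0) (x : Γ) : 2 • x ≠ γ := by
    have hγ0 : (γ : Γ) ≠ 0 := fun h => (mem_erase.1 hγ).1 (Subtype.ext h)
    refine fun hx => hγ0 (hx ▸ horder4 x ?_)
    rw [show 4 = 2 * 2 from rfl, ← smul_smul, hx]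
    exact γ.2
  exact ⟨α, β, not_double α hα, not_double β hβ, by simpa [Subtype.val_inj] using hαβ,
    α.2.trans β.2.symm⟩

theorem card_filter_prodMk_mem_map {κ α β : Type*} [Fintype κ] [Fintype β] [DecidableEq α]
    [DecidableEq β] (f : κ ↪ α × β) (a : α) : #{b | (a, b) ∈ univ.map f} = #{x | (f x).1 = a} := by
  symm
  refine card_nbij (fun x => (f x).2) (fun x hx => ?_) (fun x hx y hy h => f.injective ?_)
    fun b hb => ?_
  · simp only [coe_filter, mem_univ, true_and, Set.mem_ofPred_eq, mem_map] at hx ⊢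
    exact ⟨x, by rw [← hx]⟩
  · simp only [coe_filter, mem_univ, true_and, Set.mem_ofPred_eq] at hx hy
    exact Prod.ext (hx.trans hy.symm) h
  · simp only [coe_filter, mem_univ, true_and, Set.mem_ofPred_eq, mem_map] at hb
    obtain ⟨x, hx⟩ := hb
    exact ⟨x, by simp [hx], by simp [hx]⟩

theorem card_filter_prodMk_mem_map' {κ α β : Type*} [Fintype κ] [Fintype α] [DecidableEq α]
    [DecidableEq β] (f : κ ↪ α × β) (b : β) : #{a | (a, b) ∈ univ.map f} = #{x | (f x).2 = b} := by
  simpa [Prod.swap_eq_iff_eq_swap] using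
    card_filter_prodMk_mem_map (f.trans (Equiv.prodComm α β).toEmbedding) b

theorem exists_finset_card_row_col {m n s k : ℕ} (hsn : s ≤ n) (heq : m * s = n * k) :
    ∃ S : Finset (Fin m × Fin n),
      #S = m * s ∧ (∀ i, #{j | (i, j) ∈ S} = s) ∧ ∀ j, #{i | (i, j) ∈ S} = k := by
  -- `E (i, t) = (q, j)` where `i s + t = q n + j`
  let E : Fin m × Fin s ≃ Fin k × Fin n :=
    finProdFinEquiv.trans ((finCongr (by rw [heq, mul_comm])).trans finProdFinEquiv.symm)
  have hE (p : Fin m × Fin s) : ((E p).2 : ℕ) = (p.2 + s * p.1) % n := by simp [E, Fin.modNat]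
  let f : Fin m × Fin s ↪ Fin m × Fin n := ⟨fun p => (p.1, (E p).2), by
    rintro ⟨i, t⟩ ⟨i', t'⟩ h
    obtain ⟨rfl, h⟩ := Prod.mk.inj h
    have hmod : (t + s * i : ℕ) % n = (t' + s * i) % n := by simpa [hE] using congrArg Fin.val h
    have : (t : ℕ) ≡ t' [MOD n] := Nat.ModEq.add_right_cancel' _ hmod
    simp [Fin.ext_iff, this.eq_of_lt_of_lt (t.2.trans_le hsn) (t'.2.trans_le hsn)]⟩
  have hf (p : Fin m × Fin s) : f p = (p.1, (E p).2) := rfl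
  refine ⟨univ.map f, by simp, fun i => ?_, fun j => ?_⟩
  · rw [card_filter_prodMk_mem_map]
    simp only [hf]
    rw [← univ_product_univ, filter_product_left (· = i), card_product]
    simp [filter_eq']
  · rw [card_filter_prodMk_mem_map', ← card_map E.toEmbedding, map_filter]
    simp only [hf, Equiv.apply_symm_apply, comp_apply, map_univ_equiv]
    rw [← univ_product_univ, filter_product_right (· = j), card_product]
    simp [filter_eq']

section Blowup

variable {Γ : Type*} {m n c : ℕ} (S : Finset (Fin m × Fin n))

/-- The `2 × 2` block in rows `2i, 2i+1` and columns `2j, 2j+1` of the `t`-th array is filled with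
`w ((t, (i, j)), ·, ·)` when `(i, j) ∈ S`, and left empty otherwise. -/
def blowup (w : (Fin c × S) × Fin 2 × Fin 2 → Γ) (t : Fin c) (i : Fin (m * 2)) (j : Fin (n * 2)) :
    Option Γ :=
  let p := finProdFinEquiv.symm i
  let q := finProdFinEquiv.symm j
  if h : (p.1, q.1) ∈ S then some (w ((t, ⟨_, h⟩), p.2, q.2)) else none

theorem blowup_finProdFinEquiv (w : (Fin c × S) × Fin 2 × Fin 2 → Γ) (t : Fin c) (i : Fin m)
    (r : Fin 2) (j : Fin n) (u : Fin 2) :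
    blowup S w t (finProdFinEquiv (i, r)) (finProdFinEquiv (j, u)) =
      if h : (i, j) ∈ S then some (w ((t, ⟨(i, j), h⟩), r, u)) else none := by
  simp [blowup]

theorem existsUnique_blowup_eq_some (w : (Fin c × S) × Fin 2 × Fin 2 ≃ Γ) (g : Γ) :
    ∃! p : Fin c × Fin (m * 2) × Fin (n * 2), blowup S w p.1 p.2.1 p.2.2 = some g := by
  let e : Fin c × (Fin m × Fin 2) × (Fin n × Fin 2) ≃ Fin c × Fin (m * 2) × Fin (n * 2) :=
    (Equiv.refl _).prodCongr (finProdFinEquiv.prodCongr finProdFinEquiv)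
  rw [← e.existsUnique_congr_right]
  obtain ⟨⟨⟨t, ⟨⟨i, j⟩, h⟩⟩, r, u⟩, rfl⟩ := w.surjective g
  refine ⟨(t, (i, r), (j, u)), by simp [e, blowup_finProdFinEquiv, h], ?_⟩
  rintro ⟨t', ⟨i', r'⟩, ⟨j', u'⟩⟩ h'
  simp only [e, Equiv.prodCongr_apply, Equiv.coe_refl, Prod.map_apply, id_eq,
    blowup_finProdFinEquiv, Option.dite_none_right_eq_some, Option.some.injEq,
    EmbeddingLike.apply_eq_iff_eq, Prod.mk.injEq, Subtype.mk.injEq] at h'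
  obtain ⟨-, ⟨rfl, rfl, rfl⟩, rfl, rfl⟩ := h'
  rfl

theorem sum_fin_mul_two {M : Type*} [AddCommMonoid M] (f : Fin (n * 2) → M) :
    ∑ j, f j = ∑ j : Fin n, (f (finProdFinEquiv (j, 0)) + f (finProdFinEquiv (j, 1))) := by
  rw [← finProdFinEquiv.sum_comp, Fintype.sum_prod_type]
  simp [Fin.sum_univ_two]

variable {M : Type*} [AddCommMonoid M] {w : (Fin c × S) × Fin 2 × Fin 2 → Γ} (F : Option Γ → M)

theorem sum_blowup_row (hF : F none = 0) {r : Fin 2} {a : M}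
    (hw : ∀ p, F (some (w (p, r, 0))) + F (some (w (p, r, 1))) = a) (t : Fin c) (i : Fin m) :
    ∑ j, F (blowup S w t (finProdFinEquiv (i, r)) j) = #{j | (i, j) ∈ S} • a := by
  rw [sum_fin_mul_two, ← sum_const, sum_filter]
  refine sum_congr rfl fun j _ => ?_
  by_cases h : (i, j) ∈ S <;> simp [blowup_finProdFinEquiv, h, hF, hw]

theorem sum_blowup_col (hF : F none = 0) {u : Fin 2} {b : M}
    (hw : ∀ p, F (some (w (p, 0, u))) + F (some (w (p, 1, u))) = b) (t : Fin c) (j : Fin n) :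
    ∑ i, F (blowup S w t i (finProdFinEquiv (j, u))) = #{i | (i, j) ∈ S} • b := by
  rw [sum_fin_mul_two, ← sum_const, sum_filter]
  refine sum_congr rfl fun i _ => ?_
  by_cases h : (i, j) ∈ S <;> simp [blowup_finProdFinEquiv, h, hF, hw]

end Blowup

theorem isPartialMRS_blowup {Γ : Type*} [AddCommGroup Γ] {m n s k c : ℕ} {α β : Γ}
    {S : Finset (Fin m × Fin n)} (hrow : ∀ i, #{j | (i, j) ∈ S} = s)
    (hcol : ∀ j, #{i | (i, j) ∈ S} = k) (w : (Fin c × S) × Fin 2 × Fin 2 ≃ Γ)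
    (hwrow : ∀ p r, w (p, r, 0) + w (p, r, 1) = α) (hwcol : ∀ p u, w (p, 0, u) + w (p, 1, u) = β) :
    IsPartialMRS (m * 2) (n * 2) (s * 2) (k * 2) c (blowup S w) := by
  refine ⟨existsUnique_blowup_eq_some S w, fun t i => ?_, fun t j => ?_, s • α, k • β,
    fun t i => ?_, fun t j => ?_⟩
  · obtain ⟨⟨i, r⟩, rfl⟩ := finProdFinEquiv.surjective i
    rw [card_filter, sum_blowup_row S (fun o => if o.isSome then 1 else 0) rfl (a := 2)
      (fun _ => rfl), hrow, smul_eq_mul]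
  · obtain ⟨⟨j, u⟩, rfl⟩ := finProdFinEquiv.surjective j
    rw [card_filter, sum_blowup_col S (fun o => if o.isSome then 1 else 0) rfl (b := 2)
      (fun _ => rfl), hcol, smul_eq_mul]
  · obtain ⟨⟨i, r⟩, rfl⟩ := finProdFinEquiv.surjective i
    rw [sum_blowup_row S (fun o => o.getD 0) rfl (hwrow · r), hrow]
  · obtain ⟨⟨j, u⟩, rfl⟩ := finProdFinEquiv.surjective j
    rw [sum_blowup_col S (fun o => o.getD 0) rfl (hwcol · u), hcol]

theorem stmt14_general (m n s k c : ℕ) (hme : Even m) (hne : Even n) (hse : Even s) (hke : Even k)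
    (hsn : s ≤ n) (heq : m * s = n * k)
    (Γ : Type*) [AddCommGroup Γ] [Fintype Γ] (hcard : Fintype.card Γ = n * k * c) :
    ∃ A : Fin c → Fin m → Fin n → Option Γ, IsPartialMRS m n s k c A := by
  obtain ⟨m', rfl⟩ := hme
  obtain ⟨n', rfl⟩ := hne
  obtain ⟨s', rfl⟩ := hse
  obtain ⟨k', rfl⟩ := hke
  rw [← mul_two m', ← mul_two n', ← mul_two s', ← mul_two k']
  rw [← Nat.card_eq_fintype_card] at hcard
  have heq' : m' * s' = n' * k' := by linarith
  obtain ⟨S, hS, hrow, hcol⟩ := exists_finset_card_row_col (by omega) heq'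
  obtain ⟨α, β, hα, hβ, hαβ, h2⟩ :=
    exists_pair_not_double ⟨n' * k' * c, by rw [hcard]; ring⟩
  obtain ⟨w, hwrow, hwcol⟩ := exists_equiv_blocks_rowSum_colSum hα hβ hαβ h2 (Fin c × S) <| by
    rw [hcard, Nat.card_prod, Nat.card_fin, Nat.card_eq_fintype_card, Fintype.card_coe, hS, heq']
    ring
  exact ⟨blowup S w, isPartialMRS_blowup hrow hcol w hwrow hwcol⟩

/-- Let `m,n,s,k` be even integers with `2 ≤ s ≤ n`, `2 ≤ k ≤ m` and `m·s = n·k`, and let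
`c ≥ 1`. For every abelian group `Γ` of order `n·k·c` there exists an `MRS_Γ(m,n;s,k;c)`. -/
theorem stmt14 (m n s k c : ℕ) (hme : Even m) (hne : Even n) (hse : Even s) (hke : Even k)
    (hs : 2 ≤ s) (hsn : s ≤ n) (hk : 2 ≤ k) (hkm : k ≤ m) (heq : m * s = n * k)
    (hc : 1 ≤ c)
    (Γ : Type*) [AddCommGroup Γ] [Fintype Γ] (hcard : Fintype.card Γ = n * k * c) :
    ∃ A : Fin c → Fin m → Fin n → Option Γ, IsPartialMRS m n s k c A :=
  stmt14_general m n s k c hme hne hse hke hsn heq Γ hcard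
end

section
/- Let m, n, s, k be integers such that 2 ≤ s ≤ n, 2 ≤ k ≤ m and m·s = n·k, let c ≥ 1, let Γ be a finite abelian group of order n·k·c, and set d = gcd(s,k) (so that k divides m·d and m·d·c/k is a positive integer). If there exists a Γ-magic rectangle set MRS_Γ(k/d, s; m·d·c/k), then there exists a Γ-magic rectangle set MRS_Γ(m,n;s,k;c). -/
/-!
Write `d = gcd(s,k)`, `a = k/d` and `q = m/a`, so that `q·s = d·n`. Each row of an array of the
new set is a row `x < a` of a block `r < q`, and block `r` of array `t` is filled with the full
array `(t, r)` of size `a × s`, placed in the `s` cyclically consecutive columns starting at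
`r·s mod n`. Rows then carry `s` entries summing to `ω`. The `q` windows of length `s` wind exactly
`d` times around the `n` columns, so every column meets `d` blocks, each contributing one full
column of a source array: `a·d = k` entries summing to `d·δ`.
-/

open Finset

/-- A Γ-magic rectangle set `MRS_Γ(a,b;c)` on fully filled arrays. -/
def IsFullMRS {Γ : Type*} [AddCommGroup Γ] (a b c : ℕ)
    (A : Fin c → Fin a → Fin b → Γ) : Prop :=
  (Function.Bijective fun p : Fin c × Fin a × Fin b => A p.1 p.2.1 p.2.2) ∧
  ∃ ω δ : Γ,
    (∀ t : Fin c, ∀ i : Fin a, (∑ j : Fin b, A t i j) = ω) ∧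
    (∀ t : Fin c, ∀ j : Fin b, (∑ i : Fin a, A t i j) = δ)

namespace Option

theorem getD_map_const_eq_ite {α M : Type*} [Zero M] (o : Option α) (b : M) :
    (o.map fun _ => b).getD 0 = if o.isSome then b else 0 := by
  cases o <;> rfl

theorem sum_getD_map {α ι M : Type*} [AddCommMonoid M] (s : Finset ι) (o : Option α)
    (f : ι → α → M) :
    ∑ i ∈ s, (o.map (f i)).getD 0 = (o.map fun a => ∑ i ∈ s, f i a).getD 0 := by
  cases o <;> simp

end Option

theorem Fintype.sum_getD_map_of_existsUnique {ι α M : Type*} [Fintype ι] [Fintype α]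
    [AddCommMonoid M] {o : ι → Option α} (ho : ∀ a, ∃! i, o i = some a) (f : α → M) :
    ∑ i, ((o i).map f).getD 0 = ∑ a, f a := by
  classical
  calc ∑ i, ((o i).map f).getD 0 = ∑ i, ∑ a, if o i = some a then f a else 0 := by
        refine Fintype.sum_congr _ _ fun i => ?_
        cases o i <;> simp
    _ = ∑ a, ∑ i, if o i = some a then f a else 0 := Finset.sum_comm
    _ = ∑ a, f a := by
        refine Fintype.sum_congr _ _ fun a => ?_
        obtain ⟨i, hi, huniq⟩ := ho a
        rw [Fintype.sum_eq_single i fun j hj => if_neg fun h => hj (huniq j h), if_pos hi]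

theorem Fintype.sum_getD_map_equiv_prod {ι R X α M : Type*} [Fintype ι] [Fintype R] [Fintype X]
    [AddCommMonoid M] (ρ : ι ≃ R × X) (o : R → Option α) {F : R → X → α → M} {δ : M}
    (hF : ∀ r a, ∑ x, F r x a = δ) :
    ∑ i, ((o (ρ i).1).map (F (ρ i).1 (ρ i).2)).getD 0 = #{r | (o r).isSome} • δ := by
  rw [ρ.sum_comp (fun p => ((o p.1).map (F p.1 p.2)).getD 0), Fintype.sum_prod_type]
  simp only [Option.sum_getD_map, hF, Option.getD_map_const_eq_ite, Finset.sum_ite,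
    Finset.sum_const, smul_zero, add_zero]

theorem Fintype.card_filter_isSome_of_existsUnique {ι α : Type*} [Fintype ι] [Fintype α]
    {o : ι → Option α} (ho : ∀ a, ∃! i, o i = some a) :
    #{i | (o i).isSome} = Fintype.card α := by
  rw [Finset.card_filter]
  simpa only [Option.getD_map_const_eq_ite, Finset.sum_const, Finset.card_univ, smul_eq_mul,
    mul_one] using Fintype.sum_getD_map_of_existsUnique ho (fun _ => (1 : ℕ))

theorem Fintype.card_filter_isSome_equiv_prod {ι R X α : Type*} [Fintype ι] [Fintype R]
    [Fintype X]
    (ρ : ι ≃ R × X) (o : R → Option α) :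
    #{i | (o (ρ i).1).isSome} = #{r | (o r).isSome} * Fintype.card X := by
  rw [Finset.card_filter]
  simpa only [Option.getD_map_const_eq_ite, Finset.sum_const, Finset.card_univ, smul_eq_mul,
    mul_one] using
    Fintype.sum_getD_map_equiv_prod ρ o (F := fun _ _ _ => (1 : ℕ)) fun _ _ => rfl

theorem Finset.card_filter_isSome_eq_card_filter_eq_some {ι α : Type*} [Fintype ι] [Fintype α]
    [DecidableEq α] (o : ι → Option α) :
    #{i | (o i).isSome} = #{p : ι × α | o p.1 = some p.2} := by
  rw [Finset.card_filter, Finset.card_filter, Fintype.sum_prod_type]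
  refine Fintype.sum_congr _ _ fun i => ?_
  cases h : o i <;> simp [h]

/-- `pos r j` is the column of the source arrays of block `r` that lands in column `j`. -/
theorem IsFullMRS.isPartialMRS_of_placement {Γ R : Type*} [AddCommGroup Γ] [Fintype R]
    {a s N c m n k d : ℕ} {B : Fin N → Fin a → Fin s → Γ} (hB : IsFullMRS a s N B)
    (e : Fin c × R ≃ Fin N) (ρ : Fin m ≃ R × Fin a) {pos : R → Fin n → Option (Fin s)}
    (hpos : ∀ r y, ∃! j, pos r j = some y) (hcover : ∀ j, #{r | (pos r j).isSome} = d)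
    (hk : a * d = k) :
    IsPartialMRS m n s k c fun t i j => (pos (ρ i).1 j).map (B (e (t, (ρ i).1)) (ρ i).2) := by
  obtain ⟨hbij, ω, δ, hrow, hcol⟩ := hB
  refine ⟨fun g => ?_, fun t i => ?_, fun t j => ?_, ω, d • δ, fun t i => ?_, fun t j => ?_⟩
  · obtain ⟨⟨u, x, y⟩, hg, huniq⟩ := hbij.existsUnique g
    obtain ⟨j, hj, hjuniq⟩ := hpos (e.symm u).2 y
    refine ⟨((e.symm u).1, ρ.symm ((e.symm u).2, x), j), by simp [hj, hg], ?_⟩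
    rintro ⟨t', i', j'⟩ h'
    obtain ⟨y', hy', hg'⟩ := Option.map_eq_some_iff.1 h'
    obtain ⟨rfl, rfl, rfl⟩ := Prod.ext_iff.1 (huniq (e (t', (ρ i').1), (ρ i').2, y') hg')
    simp only [Equiv.symm_apply_apply] at hjuniq ⊢
    simp [hjuniq j' hy']
  · simp only [Option.isSome_map]
    rw [Fintype.card_filter_isSome_of_existsUnique (hpos _), Fintype.card_fin]
  · simp only [Option.isSome_map]
    rw [Fintype.card_filter_isSome_equiv_prod ρ (fun r => pos r j), hcover, Fintype.card_fin,
      mul_comm, hk]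
  · exact (Fintype.sum_getD_map_of_existsUnique (hpos _) _).trans (hrow _ _)
  · exact (Fintype.sum_getD_map_equiv_prod ρ (fun r => pos r j)
      (F := fun r x y => B (e (t, r)) x y) fun r y => hcol _ _).trans (by rw [hcover])

section CyclicWindow

variable {n : ℕ} [NeZero n]

def cyclicWindow (s : ℕ) (z j : Fin n) : Option (Fin s) :=
  if h : (j - z).val < s then some ⟨(j - z).val, h⟩ else none

theorem cyclicWindow_eq_some_iff {s : ℕ} (hsn : s ≤ n) {z j : Fin n} {y : Fin s} :
    cyclicWindow s z j = some y ↔ j = Fin.castLE hsn y + z := by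
  rw [← sub_eq_iff_eq_add, cyclicWindow, Fin.ext_iff]
  split_ifs with h
  · simp [Fin.ext_iff]
  · simp only [false_iff]
    exact fun h' => h (h' ▸ y.isLt)

theorem existsUnique_cyclicWindow_eq_some {s : ℕ} (hsn : s ≤ n) (z : Fin n) (y : Fin s) :
    ∃! j, cyclicWindow s z j = some y :=
  ⟨_, (cyclicWindow_eq_some_iff hsn).2 rfl, fun _ => (cyclicWindow_eq_some_iff hsn).1⟩

theorem card_filter_isSome_cyclicWindow {s q d : ℕ} (hsn : s ≤ n) (hqs : q * s = d * n)
    (j : Fin n) : #{r : Fin q | (cyclicWindow s (Fin.ofNat n (r * s)) j).isSome} = d := by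
  -- `(r, y) ↦ r·s + y` identifies `Fin q × Fin s` with `Fin (d·n)`, and cell `y` of window `r`
  -- lies in column `(r·s + y) mod n`.
  let e : Fin q × Fin s ≃ Fin d × Fin n :=
    finProdFinEquiv.trans ((finCongr hqs).trans finProdFinEquiv.symm)
  have he : ∀ p, (e p).2 = Fin.ofNat n (p.1 * s + p.2) := fun p => by
    ext; simp [e, Fin.modNat, add_comm, mul_comm]
  rw [Finset.card_filter_isSome_eq_card_filter_eq_some]
  calc #{p : Fin q × Fin s | cyclicWindow s (Fin.ofNat n (p.1 * s)) j = some p.2}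
      = #{x : Fin d × Fin n | x.2 = j} := by
        refine Finset.card_equiv e fun p => ?_
        simp only [Finset.mem_filter, Finset.mem_univ, true_and, cyclicWindow_eq_some_iff hsn, he,
          eq_comm (a := j), Fin.ext_iff, Fin.val_add, Fin.val_ofNat, Fin.val_castLE]
        rw [Nat.add_mod_mod, add_comm]
    _ = d := by
        rw [Finset.card_filter, Fintype.sum_prod_type]
        simp

end CyclicWindow

theorem Nat.div_gcd_dvd_of_mul_eq_mul {m n s k : ℕ} (hk : 0 < k) (h : m * s = n * k) :
    k / s.gcd k ∣ m := by
  have hd : 0 < s.gcd k := Nat.gcd_pos_of_pos_right s hk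
  refine (Nat.coprime_div_gcd_div_gcd hd).symm.dvd_of_dvd_mul_right ⟨n, ?_⟩
  apply Nat.eq_of_mul_eq_mul_right hd
  rw [mul_assoc, Nat.div_mul_cancel (Nat.gcd_dvd_left s k), mul_right_comm,
    Nat.div_mul_cancel (Nat.gcd_dvd_right s k), h, mul_comm]

theorem stmt15_general (m n s k c : ℕ) (hs : 2 ≤ s) (hsn : s ≤ n) (hk : 2 ≤ k)
    (heq : m * s = n * k)
    (Γ : Type*) [AddCommGroup Γ]
    (hex : ∃ A : Fin (m * Nat.gcd s k * c / k) → Fin (k / Nat.gcd s k) → Fin s → Γ,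
      IsFullMRS (k / Nat.gcd s k) s (m * Nat.gcd s k * c / k) A) :
    ∃ A : Fin c → Fin m → Fin n → Option Γ, IsPartialMRS m n s k c A := by
  obtain ⟨B, hB⟩ := hex
  set d := s.gcd k
  set a := k / d
  have had : a * d = k := Nat.div_mul_cancel (Nat.gcd_dvd_right s k)
  have ha : 0 < a := Nat.pos_of_ne_zero fun h => by rw [h, zero_mul] at had; omega
  obtain ⟨q, hm⟩ : a ∣ m := Nat.div_gcd_dvd_of_mul_eq_mul (by omega) heq
  have hqs : q * s = d * n := Nat.eq_of_mul_eq_mul_left ha <| by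
    rw [← mul_assoc, ← hm, heq, ← had]; ring
  have hN : c * q = m * d * c / k := by
    have : m * d * c = c * q * k := by rw [hm, ← had]; ring
    rw [this, Nat.mul_div_cancel _ (by omega)]
  have : NeZero n := ⟨by omega⟩
  exact ⟨_, hB.isPartialMRS_of_placement (finProdFinEquiv.trans (finCongr hN))
    ((finCongr (hm.trans (mul_comm a q))).trans finProdFinEquiv.symm)
    (fun r => existsUnique_cyclicWindow_eq_some hsn (Fin.ofNat n (r * s)))
    (card_filter_isSome_cyclicWindow hsn hqs) had⟩

/-- Let `2 ≤ s ≤ n`, `2 ≤ k ≤ m`, `m·s = n·k`, `c ≥ 1` and let `Γ` be an abelian group of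
order `n·k·c`. If there exists an `MRS_Γ(k/d, s; m·d·c/k)` where `d = gcd(s,k)`, then there
exists an `MRS_Γ(m,n;s,k;c)`. -/
theorem stmt15 (m n s k c : ℕ) (hs : 2 ≤ s) (hsn : s ≤ n) (hk : 2 ≤ k) (hkm : k ≤ m)
    (heq : m * s = n * k) (hc : 1 ≤ c)
    (Γ : Type*) [AddCommGroup Γ] [Fintype Γ] (hcard : Fintype.card Γ = n * k * c)
    (hex : ∃ A : Fin (m * Nat.gcd s k * c / k) → Fin (k / Nat.gcd s k) → Fin s → Γ,
      IsFullMRS (k / Nat.gcd s k) s (m * Nat.gcd s k * c / k) A) :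
    ∃ A : Fin c → Fin m → Fin n → Option Γ, IsPartialMRS m n s k c A :=
  stmt15_general m n s k c hs hsn hk heq Γ hex
end
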